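/- arXiv:0707.1174 — 10 statements merged into one kernel-verified Lean document; each statement's English description precedes it below -/
import Mathlib

section
/- In a normed vector space E whose closed unit ball is strictly convex, for any two points x, y the line segment t ↦ (1−t)x + ty, t ∈ [0,1], is, up to reparametrization, the unique curve of minimal length (equal to ‖x−y‖) connecting x to y. -/
/-!
A curve `γ` on `[a, b]` whose length equals `edist (γ a) (γ b)` has, for every `t`, length
`edist (γ a) (γ t)` on `[a, t]` and `edist (γ t) (γ b)` on `[t, b]`, so every `γ t` turns the
triangle inequality into an equality. Strict convexity makes such points lie on the segment
`[γ a, γ b]`, and by the intermediate value theorem applied to `t ↦ dist (γ t) (γ a)` a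
continuous curve inside the segment sweeps all of it.
-/

open Set

open AffineMap in
theorem eVariationOn_lineMap_Icc {E : Type*} [NormedAddCommGroup E] [NormedSpace ℝ E]
    (x y : E) {a b : ℝ} (hab : a ≤ b) :
    eVariationOn (lineMap x y : ℝ → E) (Icc a b) = ENNReal.ofReal (b - a) * edist x y := by
  apply le_antisymm
  · calc eVariationOn (lineMap x y ∘ id : ℝ → E) (Icc a b)
        ≤ nndist x y * eVariationOn id (Icc a b) :=
          (lipschitzWith_lineMap x y).lipschitzOnWith.comp_eVariationOn_le (mapsTo_univ _ _)
      _ = ENNReal.ofReal (b - a) * edist x y := by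
          rw [eVariationOn_id_Icc, mul_comm, edist_nndist]
  · calc ENNReal.ofReal (b - a) * edist x y
        = edist (lineMap x y a : E) (lineMap x y b) := by
          rw [edist_dist, edist_dist, dist_lineMap_lineMap, Real.dist_eq, abs_sub_comm,
            abs_of_nonneg (sub_nonneg.2 hab), ENNReal.ofReal_mul (sub_nonneg.2 hab)]
      _ ≤ _ := eVariationOn.edist_le _ (left_mem_Icc.2 hab) (right_mem_Icc.2 hab)

theorem edist_add_edist_eq_of_eVariationOn_eq {α : Type*} [PseudoEMetricSpace α] {γ : ℝ → α}
    {a b t : ℝ} (ht : t ∈ Icc a b) (hγ : eVariationOn γ (Icc a b) = edist (γ a) (γ b)) :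
    edist (γ a) (γ t) + edist (γ t) (γ b) = edist (γ a) (γ b) := by
  refine le_antisymm ?_ (edist_triangle _ _ _)
  have hsplit := eVariationOn.Icc_add_Icc γ ht.1 ht.2 (mem_univ t)
  simp only [univ_inter] at hsplit
  calc edist (γ a) (γ t) + edist (γ t) (γ b)
      ≤ eVariationOn γ (Icc a t) + eVariationOn γ (Icc t b) :=
        add_le_add (eVariationOn.edist_le γ (left_mem_Icc.2 ht.1) (right_mem_Icc.2 ht.1))
          (eVariationOn.edist_le γ (left_mem_Icc.2 ht.2) (right_mem_Icc.2 ht.2))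
    _ = edist (γ a) (γ b) := by rw [hsplit, hγ]

theorem mapsTo_segment_of_eVariationOn_eq {E : Type*} [NormedAddCommGroup E] [NormedSpace ℝ E]
    [StrictConvexSpace ℝ E] {γ : ℝ → E} {a b : ℝ}
    (hγ : eVariationOn γ (Icc a b) = edist (γ a) (γ b)) :
    MapsTo γ (Icc a b) (segment ℝ (γ a) (γ b)) := by
  intro t ht
  have h := edist_add_edist_eq_of_eVariationOn_eq ht hγ
  simp only [edist_dist] at h
  rw [← ENNReal.ofReal_add dist_nonneg dist_nonneg,
    ENNReal.ofReal_eq_ofReal_iff (add_nonneg dist_nonneg dist_nonneg) dist_nonneg] at h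
  exact mem_segment_iff_wbtw.2 (dist_add_dist_eq_iff.1 h)

open AffineMap in
theorem segment_subset_image_of_mapsTo_segment {E : Type*} [NormedAddCommGroup E]
    [NormedSpace ℝ E] {γ : ℝ → E} {a b : ℝ} (hab : a ≤ b) (hγc : ContinuousOn γ (Icc a b))
    (hγ : MapsTo γ (Icc a b) (segment ℝ (γ a) (γ b))) :
    segment ℝ (γ a) (γ b) ⊆ γ '' Icc a b := by
  rw [segment_eq_image_lineMap]
  rintro _ ⟨c, hc, rfl⟩
  have hdist : c * dist (γ a) (γ b) ∈ Icc (dist (γ a) (γ a)) (dist (γ b) (γ a)) := by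
    rw [dist_self, dist_comm]
    exact ⟨mul_nonneg hc.1 dist_nonneg, mul_le_of_le_one_left dist_nonneg hc.2⟩
  obtain ⟨t, ht, hγt⟩ := intermediate_value_Icc hab
    (f := fun t => dist (γ t) (γ a)) (by fun_prop) hdist
  obtain ⟨d, hd, hγd⟩ : γ t ∈ lineMap (γ a) (γ b) '' Icc (0 : ℝ) 1 :=
    segment_eq_image_lineMap ℝ (γ a) (γ b) ▸ hγ ht
  refine ⟨t, ht, ?_⟩
  beta_reduce at hγt
  rw [← hγd] at hγt ⊢
  rw [dist_lineMap_left, Real.norm_of_nonneg hd.1] at hγt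
  rcases eq_or_ne (γ a) (γ b) with hend | hend
  · simp [hend]
  · rw [mul_right_cancel₀ (dist_ne_zero.2 hend) hγt]

/-- In a normed space with strictly convex closed unit ball, the segment from `x` to `y`
has length `‖x - y‖`, and any continuous curve from `x` to `y` whose length (total
variation) equals `‖x - y‖` has the segment as its image; i.e. up to reparametrization
the segment is the unique minimal-length curve joining `x` and `y`. -/
theorem stmt_2 {E : Type*} [NormedAddCommGroup E] [NormedSpace ℝ E]
    [StrictConvexSpace ℝ E] (x y : E) :
    eVariationOn (fun t : ℝ => (1 - t) • x + t • y) (Icc 0 1)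
      = ENNReal.ofReal ‖x - y‖ ∧
    ∀ γ : ℝ → E, ContinuousOn γ (Icc 0 1) → γ 0 = x → γ 1 = y →
      eVariationOn γ (Icc 0 1) = ENNReal.ofReal ‖x - y‖ →
      γ '' (Icc 0 1) = segment ℝ x y := by
  have hlen : ENNReal.ofReal ‖x - y‖ = edist x y := by rw [edist_dist, dist_eq_norm]
  refine ⟨?_, fun γ hγc hγ0 hγ1 hvar => ?_⟩
  · simp_rw [← AffineMap.lineMap_apply_module]
    rw [eVariationOn_lineMap_Icc x y zero_le_one, sub_zero, ENNReal.ofReal_one, one_mul, hlen]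
  · subst hγ0 hγ1
    rw [hlen] at hvar
    exact (mapsTo_segment_of_eVariationOn_eq hvar).image_subset.antisymm
      (segment_subset_image_of_mapsTo_segment zero_le_one hγc
        (mapsTo_segment_of_eVariationOn_eq hvar))
end

section
/- Let E be a uniformly convex Banach space and M ⊆ E a closed subset, regarded as a metric space with the induced norm distance. If for x, y ∈ M the geodesic (intrinsic) distance of x and y in M equals ‖x−y‖, then the entire segment {(1−t)x + ty : t ∈ [0,1]} is contained in M. -/
/-!
Let `D = ‖y - x‖ > 0` and `0 < t < 1`. A curve in `M` from `x` to `y` of length `< D + δ` passes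
through a point `p` with `‖p - x‖ = t D`, and then `‖y - p‖ < (1 - t) D + δ`. So the triangle
`x, p, y` is almost degenerate, and uniform convexity (in its scale-invariant form with weights
`t, 1 - t`) forces `p` to be close to `x + t • (y - x)`. Hence the open segment lies in
`closure M = M`, and so does its closure, the segment.
-/

open Set

section UniformConvex

variable {E : Type*} [SeminormedAddCommGroup E] [NormedSpace ℝ E] [UniformConvexSpace E]

theorem exists_forall_norm_add_le_two_sub_mul {ε : ℝ} (hε : 0 < ε) :
    ∃ δ > 0, ∀ ⦃r : ℝ⦄ ⦃x y : E⦄, ‖x‖ ≤ r → ‖y‖ ≤ r → ε * r ≤ ‖x - y‖ →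
      ‖x + y‖ ≤ (2 - δ) * r := by
  obtain ⟨δ, hδ, hunit⟩ := exists_forall_closed_ball_dist_add_le_two_sub E hε
  refine ⟨δ, hδ, fun r x y hx hy hxy => ?_⟩
  rcases ((norm_nonneg x).trans hx).eq_or_lt with rfl | hr
  · rw [mul_zero]
    linarith [norm_add_le x y]
  have hscale : ∀ z : E, ‖r⁻¹ • z‖ = r⁻¹ * ‖z‖ := fun z => norm_smul_of_nonneg (by positivity) z
  have := hunit (x := r⁻¹ • x) (y := r⁻¹ • y)
    (by rw [hscale, inv_mul_le_iff₀ hr, mul_one]; exact hx)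
    (by rw [hscale, inv_mul_le_iff₀ hr, mul_one]; exact hy)
    (by rw [← smul_sub, hscale, le_inv_mul_iff₀ hr, mul_comm]; exact hxy)
  rwa [← smul_add, hscale, inv_mul_le_iff₀ hr, mul_comm] at this

theorem exists_forall_norm_smul_add_smul_le {ε t : ℝ} (hε : 0 < ε) (ht0 : 0 < t) (ht1 : t < 1) :
    ∃ δ > 0, ∀ ⦃r : ℝ⦄ ⦃x y : E⦄, ‖x‖ ≤ r → ‖y‖ ≤ r → ε * r ≤ ‖x - y‖ →
      ‖t • x + (1 - t) • y‖ ≤ (1 - δ) * r := by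
  obtain ⟨δ, hδ, hmid⟩ := exists_forall_norm_add_le_two_sub_mul (E := E) hε
  refine ⟨min t (1 - t) * δ, by have := sub_pos.2 ht1; positivity, fun r x y hx hy hxy => ?_⟩
  have hsum := hmid hx hy hxy
  rcases le_total t (1 - t) with h | h
  · calc ‖t • x + (1 - t) • y‖ = ‖t • (x + y) + (1 - 2 * t) • y‖ := by congr 1; module
      _ ≤ t * ‖x + y‖ + (1 - 2 * t) * ‖y‖ := by
          refine (norm_add_le _ _).trans_eq ?_
          rw [norm_smul_of_nonneg ht0.le, norm_smul_of_nonneg (by linarith)]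
      _ ≤ t * ((2 - δ) * r) + (1 - 2 * t) * r := by gcongr; linarith
      _ = (1 - min t (1 - t) * δ) * r := by rw [min_eq_left h]; ring
  · calc ‖t • x + (1 - t) • y‖ = ‖(1 - t) • (x + y) + (2 * t - 1) • x‖ := by congr 1; module
      _ ≤ (1 - t) * ‖x + y‖ + (2 * t - 1) * ‖x‖ := by
          refine (norm_add_le _ _).trans_eq ?_
          rw [norm_smul_of_nonneg (by linarith), norm_smul_of_nonneg (by linarith)]
      _ ≤ (1 - t) * ((2 - δ) * r) + (2 * t - 1) * r := by gcongr; linarith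
      _ = (1 - min t (1 - t) * δ) * r := by rw [min_eq_right h]; ring

theorem exists_forall_norm_sub_smul_add_lt {ε t D : ℝ} (hε : 0 < ε) (ht0 : 0 < t) (ht1 : t < 1)
    (hD : 0 < D) :
    ∃ δ > 0, ∀ ⦃a b : E⦄, ‖a‖ ≤ t * D → ‖b‖ ≤ (1 - t) * D + δ → D ≤ ‖a + b‖ →
      ‖a - t • (a + b)‖ < ε := by
  have ht1' : 0 < 1 - t := sub_pos.2 ht1
  obtain ⟨η, hη, hconv⟩ :=
    exists_forall_norm_smul_add_smul_le (E := E) (ε := ε / (t * (1 - t) * (D + 1))) (by positivity)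
      ht0 ht1
  refine ⟨min (1 - t) ((1 - t) * η * D / 2), by positivity, fun a b ha hb hab => ?_⟩
  set δ := min (1 - t) ((1 - t) * η * D / 2)
  -- `a = t • x`, `b = (1 - t) • y` with `x, y` in the ball of radius `R = D + δ / (1 - t)`
  set R := D + δ / (1 - t)
  have hRD : R - D < η * D := by
    rw [add_sub_cancel_left, div_lt_iff₀ ht1']
    calc δ ≤ (1 - t) * η * D / 2 := min_le_right _ _
      _ < η * D * (1 - t) := by nlinarith [mul_pos (mul_pos ht1' hη) hD]
  have hDR : D ≤ R := le_add_of_nonneg_right (by positivity)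
  have hR1 : R ≤ D + 1 := by
    have : δ / (1 - t) ≤ 1 := (div_le_one ht1').2 (min_le_left _ _)
    linarith
  set x := t⁻¹ • a
  set y := (1 - t)⁻¹ • b
  have hxy : a + b = t • x + (1 - t) • y := by
    simp only [x, y, smul_smul, mul_inv_cancel₀ ht0.ne', mul_inv_cancel₀ ht1'.ne', one_smul]
  have hdiff : a - t • (a + b) = (t * (1 - t)) • (x - y) := by
    rw [hxy]
    simp only [x, y, smul_sub, smul_smul]
    field_simp
    module
  rw [hdiff, norm_smul_of_nonneg (by positivity)]
  by_contra! hfar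
  have hx : ‖x‖ ≤ R := by
    rw [norm_smul_of_nonneg (by positivity), inv_mul_le_iff₀ ht0]
    exact ha.trans (by gcongr)
  have hy : ‖y‖ ≤ R := by
    rw [norm_smul_of_nonneg (by positivity), inv_mul_le_iff₀ ht1']
    calc ‖b‖ ≤ (1 - t) * D + δ := hb
      _ = (1 - t) * R := by simp only [R]; field_simp
  have hfar' : ε / (t * (1 - t) * (D + 1)) * R ≤ ‖x - y‖ := by
    rw [div_mul_eq_mul_div, div_le_iff₀ (by positivity)]
    calc ε * R ≤ ε * (D + 1) := by gcongr
      _ ≤ t * (1 - t) * ‖x - y‖ * (D + 1) := by gcongr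
      _ = _ := by ring
  have := hconv hx hy hfar'
  rw [← hxy] at this
  nlinarith [mul_le_mul_of_nonneg_left hDR hη.le]

end UniformConvex

theorem eVariationOn.edist_add_edist_le {α E : Type*} [LinearOrder α] [PseudoEMetricSpace E]
    (f : α → E) {a b c : α} (hab : a ≤ b) (hbc : b ≤ c) :
    edist (f a) (f b) + edist (f b) (f c) ≤ eVariationOn f (Icc a c) := by
  have hsplit := eVariationOn.Icc_add_Icc f (s := Icc a c) hab hbc ⟨hab, hbc⟩
  simp only [Icc_inter_Icc, max_self, min_self, max_eq_right hab, min_eq_right hbc] at hsplit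
  rw [← hsplit]
  exact add_le_add (eVariationOn.edist_le f ⟨le_rfl, hab⟩ ⟨hab, le_rfl⟩)
    (eVariationOn.edist_le f ⟨le_rfl, hbc⟩ ⟨hbc, le_rfl⟩)

theorem exists_norm_sub_eq_and_ofReal_add_le_eVariationOn {E : Type*} [SeminormedAddCommGroup E]
    {γ : ℝ → E} (hγ : ContinuousOn γ (Icc 0 1)) {r : ℝ} (hr0 : 0 ≤ r) (hr : r ≤ ‖γ 1 - γ 0‖) :
    ∃ s ∈ Icc (0 : ℝ) 1, ‖γ s - γ 0‖ = r ∧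
      ENNReal.ofReal (r + ‖γ 1 - γ s‖) ≤ eVariationOn γ (Icc 0 1) := by
  obtain ⟨s, hs, hγs⟩ : r ∈ (fun s => ‖γ s - γ 0‖) '' Icc 0 1 := by
    refine intermediate_value_Icc zero_le_one ((hγ.sub continuousOn_const).norm) ?_
    simpa using And.intro hr0 hr
  refine ⟨s, hs, hγs, ?_⟩
  rw [← hγs, ENNReal.ofReal_add (norm_nonneg _) (norm_nonneg _), ← dist_eq_norm, ← dist_eq_norm,
    ← edist_dist, ← edist_dist, edist_comm (γ s), edist_comm (γ 1)]
  exact eVariationOn.edist_add_edist_le γ hs.1 hs.2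

theorem stmt_3_general {E : Type*} [NormedAddCommGroup E] [NormedSpace ℝ E]
    [UniformConvexSpace E]
    (M : Set E) (hM : IsClosed M) (x y : E) (hx : x ∈ M) (hy : y ∈ M)
    (hgeo : sInf {l : ENNReal | ∃ γ : ℝ → E, ContinuousOn γ (Icc 0 1) ∧
        (∀ t ∈ Icc (0:ℝ) 1, γ t ∈ M) ∧ γ 0 = x ∧ γ 1 = y ∧
        l = eVariationOn γ (Icc 0 1)}
      = ENNReal.ofReal ‖x - y‖) :
    segment ℝ x y ⊆ M := by
  rcases eq_or_ne x y with rfl | hxy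
  · simpa [segment_same] using hx
  rw [← closure_openSegment]
  refine closure_minimal (fun z hz => ?_) hM
  rw [← hM.closure_eq]
  refine Metric.mem_closure_iff.2 fun ε hε => ?_
  rw [openSegment_eq_image'] at hz
  obtain ⟨t, ⟨ht0, ht1⟩, rfl⟩ := hz
  obtain ⟨δ, hδ, hclose⟩ :=
    exists_forall_norm_sub_smul_add_lt (E := E) hε ht0 ht1 (norm_sub_pos_iff.2 hxy.symm)
  have hshort : ENNReal.ofReal ‖x - y‖ < ENNReal.ofReal (‖y - x‖ + δ) := by
    rw [norm_sub_rev, ENNReal.ofReal_lt_ofReal_iff (by positivity)]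
    linarith
  rw [← hgeo] at hshort
  obtain ⟨_, ⟨γ, hγc, hγM, hγ0, hγ1, rfl⟩, hγlen⟩ := sInf_lt_iff.1 hshort
  obtain ⟨s, hs, hγs, hlen⟩ := exists_norm_sub_eq_and_ofReal_add_le_eVariationOn hγc
    (r := t * ‖y - x‖) (by positivity)
    (by rw [hγ0, hγ1]; exact mul_le_of_le_one_left (norm_nonneg _) ht1.le)
  rw [hγ0] at hγs
  rw [hγ1] at hlen
  have hpath : t * ‖y - x‖ + ‖y - γ s‖ < ‖y - x‖ + δ :=
    (ENNReal.ofReal_lt_ofReal_iff (by positivity)).1 (hlen.trans_lt hγlen)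
  refine ⟨γ s, hγM s hs, ?_⟩
  have := hclose (a := γ s - x) (b := y - γ s) hγs.le (by linarith) (by rw [sub_add_sub_cancel'])
  rwa [sub_add_sub_cancel', sub_sub, ← norm_neg, neg_sub, ← dist_eq_norm] at this

/-- Let `E` be a uniformly convex Banach space and `M ⊆ E` closed, regarded as a metric
space with the induced norm distance.  If the geodesic (intrinsic) distance of
`x, y ∈ M` — the infimum of lengths of continuous curves in `M` joining `x` to `y` —
equals `‖x - y‖`, then the whole segment from `x` to `y` is contained in `M`. -/
theorem stmt_3 {E : Type*} [NormedAddCommGroup E] [NormedSpace ℝ E]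
    [UniformConvexSpace E] [CompleteSpace E]
    (M : Set E) (hM : IsClosed M) (x y : E) (hx : x ∈ M) (hy : y ∈ M)
    (hgeo : sInf {l : ENNReal | ∃ γ : ℝ → E, ContinuousOn γ (Icc 0 1) ∧
        (∀ t ∈ Icc (0:ℝ) 1, γ t ∈ M) ∧ γ 0 = x ∧ γ 1 = y ∧
        l = eVariationOn γ (Icc 0 1)}
      = ENNReal.ofReal ‖x - y‖) :
    segment ℝ x y ⊆ M :=
  stmt_3_general M hM x y hx hy hgeo
end

section
/- A compact Riemannian manifold of dimension ≥ 1 containing two points joined by more than one minimal geodesic cannot be embedded in a uniformly convex Banach space by a map i satisfying ‖i(x) − i(y)‖ = d_M(x,y) for all x,y, where d_M is the Riemannian distance. -/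
/-!
An isometric embedding into a strictly convex space (uniform convexity is more than enough)
carries every minimal geodesic from `x` to `y` onto the straight segment from `i x` to `i y`,
because in such a space the midpoint-type relations `d(a, p) = t d(a, b)`,
`d(p, b) = (1 - t) d(a, b)` determine `p` uniquely. Two minimal geodesics with the same
endpoints therefore have the same image under `i` pointwise, and, `i` being injective, coincide.
-/

open Set

namespace Isometry

variable {M V P : Type*} [PseudoMetricSpace M] [NormedAddCommGroup V] [NormedSpace ℝ V]
  [StrictConvexSpace ℝ V] [MetricSpace P] [NormedAddTorsor V P] {f : M → P}

theorem eq_lineMap_of_dist_eq_mul (hf : Isometry f) {x y p : M} {t : ℝ}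
    (hxp : dist x p = t * dist x y) (hpy : dist p y = (1 - t) * dist x y) :
    f p = AffineMap.lineMap (f x) (f y) t := by
  apply eq_lineMap_of_dist_eq_mul_of_dist_eq_mul <;> simpa only [hf.dist_eq]

theorem comp_eq_lineMap_of_dist_eq_abs_mul (hf : Isometry f) {x y : M} {γ : ℝ → M}
    (h0 : γ 0 = x) (h1 : γ 1 = y)
    (hγ : ∀ s ∈ Icc (0:ℝ) 1, ∀ u ∈ Icc (0:ℝ) 1, dist (γ s) (γ u) = |s - u| * dist x y)
    {t : ℝ} (ht : t ∈ Icc (0:ℝ) 1) :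
    f (γ t) = AffineMap.lineMap (f x) (f y) t := by
  subst h0 h1
  apply hf.eq_lineMap_of_dist_eq_mul
  · rw [hγ 0 (left_mem_Icc.2 zero_le_one) t ht, zero_sub, abs_neg, abs_of_nonneg ht.1]
  · rw [hγ t ht 1 (right_mem_Icc.2 zero_le_one), abs_sub_comm,
      abs_of_nonneg (sub_nonneg.2 ht.2)]

end Isometry

theorem stmt_4_general {M : Type*} [MetricSpace M]
    {E : Type*} [NormedAddCommGroup E] [NormedSpace ℝ E]
    [UniformConvexSpace E]
    (x y : M) (γ₁ γ₂ : ℝ → M)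
    (h₁0 : γ₁ 0 = x) (h₁1 : γ₁ 1 = y) (h₂0 : γ₂ 0 = x) (h₂1 : γ₂ 1 = y)
    (hg₁ : ∀ s ∈ Icc (0:ℝ) 1, ∀ t ∈ Icc (0:ℝ) 1,
      dist (γ₁ s) (γ₁ t) = |s - t| * dist x y)
    (hg₂ : ∀ s ∈ Icc (0:ℝ) 1, ∀ t ∈ Icc (0:ℝ) 1,
      dist (γ₂ s) (γ₂ t) = |s - t| * dist x y)
    (hne : ∃ t ∈ Icc (0:ℝ) 1, γ₁ t ≠ γ₂ t) :
    ¬ ∃ i : M → E, ∀ a b : M, ‖i a - i b‖ = dist a b := by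
  rintro ⟨i, hi⟩
  obtain ⟨t, ht, hγ₁₂⟩ := hne
  have hiso : Isometry i := Isometry.of_dist_eq fun a b => by rw [dist_eq_norm, hi]
  refine hγ₁₂ (hiso.injective ?_)
  rw [hiso.comp_eq_lineMap_of_dist_eq_abs_mul h₁0 h₁1 hg₁ ht,
    hiso.comp_eq_lineMap_of_dist_eq_abs_mul h₂0 h₂1 hg₂ ht]

/-- A compact (geodesic) metric space — such as a compact Riemannian manifold of
dimension ≥ 1 with its Riemannian distance — containing two points joined by two
distinct (constant-speed, hence distinct up to reparametrization) minimal geodesics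
admits no map `i` into a uniformly convex Banach space with
`‖i a - i b‖ = dist a b` for all `a, b`. -/
theorem stmt_4 {M : Type*} [MetricSpace M] [CompactSpace M]
    {E : Type*} [NormedAddCommGroup E] [NormedSpace ℝ E]
    [UniformConvexSpace E] [CompleteSpace E]
    (x y : M) (γ₁ γ₂ : ℝ → M)
    (h₁0 : γ₁ 0 = x) (h₁1 : γ₁ 1 = y) (h₂0 : γ₂ 0 = x) (h₂1 : γ₂ 1 = y)
    (hg₁ : ∀ s ∈ Icc (0:ℝ) 1, ∀ t ∈ Icc (0:ℝ) 1,
      dist (γ₁ s) (γ₁ t) = |s - t| * dist x y)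
    (hg₂ : ∀ s ∈ Icc (0:ℝ) 1, ∀ t ∈ Icc (0:ℝ) 1,
      dist (γ₂ s) (γ₂ t) = |s - t| * dist x y)
    (hne : ∃ t ∈ Icc (0:ℝ) 1, γ₁ t ≠ γ₂ t) :
    ¬ ∃ i : M → E, ∀ a b : M, ‖i a - i b‖ = dist a b :=
  stmt_4_general x y γ₁ γ₂ h₁0 h₁1 h₂0 h₂1 hg₁ hg₂ hne
end

section
/- Let Ω_n be a sequence of nonempty closed subsets of ℝ^N whose distance functions u_{Ω_n} converge pointwise on a dense subset D of ℝ^N to a function f. Then there exists a closed set Ω with u_Ω = f on D, and u_{Ω_n} → u_Ω uniformly on compact subsets of ℝ^N. -/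
/-!
The distance functions `uₙ` are 1-Lipschitz, so their pointwise limit on `D` is 1-Lipschitz on
`D`; extend it to a 1-Lipschitz `g` on the whole space. By equicontinuity, `uₙ → g` pointwise
everywhere, and, by Ascoli, uniformly on compact sets. Take `Ω₀ = g⁻¹(0)`. A limit point `z` of
nearest points to `x` in the closures of the `Ωₙ` (it exists by local compactness) satisfies
`g z = 0` and `|x - z| = g x`, while `g x ≤ |x - w|` for every `w ∈ Ω₀` because `g` is
1-Lipschitz; hence `u_{Ω₀} = g`.
-/

open Set Metric Filter Topology

theorem LipschitzOnWith.of_tendsto {ι α β : Type*} [PseudoMetricSpace α] [PseudoMetricSpace β]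
    {l : Filter ι} [l.NeBot] {F : ι → α → β} {f : α → β} {K : NNReal} {s : Set α}
    (hF : ∀ i, LipschitzOnWith K (F i) s) (h : ∀ x ∈ s, Tendsto (F · x) l (𝓝 (f x))) :
    LipschitzOnWith K f s :=
  LipschitzOnWith.of_dist_le_mul fun x hx y hy =>
    le_of_tendsto' ((h x hx).dist (h y hy)) fun i => (hF i).dist_le_mul x hx y hy

theorem EquicontinuousOn.tendstoUniformlyOn_of_tendsto {ι X α : Type*} [TopologicalSpace X]
    [UniformSpace α] {F : ι → X → α} {f : X → α} {l : Filter ι} {K : Set X}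
    (hK : IsCompact K) (hF : EquicontinuousOn F K) (h : ∀ x ∈ K, Tendsto (F · x) l (𝓝 (f x))) :
    TendstoUniformlyOn F f l K := by
  have : CompactSpace K := isCompact_iff_compactSpace.mp hK
  rw [tendstoUniformlyOn_iff_restrict]
  exact UniformFun.tendsto_iff_tendstoUniformly.mp <|
    ((equicontinuous_restrict_iff F).mpr hF |>.tendsto_uniformFun_iff_pi l _).mpr
      (tendsto_pi_nhds.mpr fun x => h x x.2)

namespace Metric

variable {X : Type*} [PseudoMetricSpace X] [ProperSpace X] {s : ℕ → Set X} {g : X → ℝ}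

theorem exists_dist_eq_of_tendsto_infDist (hs : ∀ n, (s n).Nonempty)
    (hg : ∀ x, Tendsto (fun n => infDist x (s n)) atTop (𝓝 (g x))) (x : X) :
    ∃ z, g z = 0 ∧ dist x z = g x := by
  have hmin : ∀ n, ∃ y ∈ closure (s n), infDist x (s n) = dist x y := fun n => by
    simpa only [infDist_closure] using isClosed_closure.exists_infDist_eq_dist (hs n).closure x
  choose y hy hyx using hmin
  obtain ⟨C, hC⟩ := (hg x).bddAbove_range
  have hyC : ∀ n, y n ∈ closedBall x C := fun n => by
    rw [mem_closedBall, dist_comm, ← hyx n]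
    exact hC (mem_range_self n)
  obtain ⟨z, -, φ, hφ, hyz⟩ := tendsto_subseq_of_bounded isBounded_closedBall hyC
  have hzy : Tendsto (fun k => dist z (y (φ k))) atTop (𝓝 0) := by
    simpa only [dist_comm z] using
      (tendsto_iff_dist_tendsto_zero.mp hyz : Tendsto (fun k => dist (y (φ k)) z) atTop (𝓝 0))
  refine ⟨z, tendsto_nhds_unique ((hg z).comp hφ.tendsto_atTop) ?_, ?_⟩
  · refine squeeze_zero (fun _ => infDist_nonneg) (fun k => ?_) hzy
    rw [Function.comp_apply, ← infDist_closure]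
    exact infDist_le_dist_of_mem (hy (φ k))
  · refine tendsto_nhds_unique (tendsto_const_nhds.dist hyz) ?_
    simpa only [Function.comp_def, hyx] using (hg x).comp hφ.tendsto_atTop

theorem infDist_preimage_zero_of_tendsto_infDist (hs : ∀ n, (s n).Nonempty)
    (hg : ∀ x, Tendsto (fun n => infDist x (s n)) atTop (𝓝 (g x))) (x : X) :
    infDist x (g ⁻¹' {0}) = g x := by
  have hlip : LipschitzWith 1 g := lipschitzOnWith_univ.mp <|
    LipschitzOnWith.of_tendsto (fun n => (lipschitz_infDist_pt (s n)).lipschitzOnWith)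
      fun x _ => hg x
  obtain ⟨z, hz, hxz⟩ := exists_dist_eq_of_tendsto_infDist hs hg x
  refine le_antisymm (hxz ▸ infDist_le_dist_of_mem hz) ((le_infDist ⟨z, hz⟩).2 fun w hw => ?_)
  have hw : g w = 0 := hw
  simpa [hw] using (le_abs_self _).trans (hlip.dist_le_mul x w)

end Metric

theorem stmt_6_general {N : ℕ} (Ω : ℕ → Set (EuclideanSpace ℝ (Fin N)))
    (hne : ∀ n, (Ω n).Nonempty)
    (D : Set (EuclideanSpace ℝ (Fin N))) (hD : Dense D)
    (f : EuclideanSpace ℝ (Fin N) → ℝ)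
    (hconv : ∀ x ∈ D, Filter.Tendsto (fun n => infDist x (Ω n)) Filter.atTop
      (nhds (f x))) :
    ∃ Ω₀ : Set (EuclideanSpace ℝ (Fin N)), IsClosed Ω₀ ∧ Ω₀.Nonempty ∧
      (∀ x ∈ D, infDist x Ω₀ = f x) ∧
      ∀ K : Set (EuclideanSpace ℝ (Fin N)), IsCompact K →
        TendstoUniformlyOn (fun n x => infDist x (Ω n)) (fun x => infDist x Ω₀)
          Filter.atTop K := by
  have hlip : ∀ n, LipschitzWith 1 (infDist · (Ω n)) := fun n => lipschitz_infDist_pt (Ω n)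
  obtain ⟨g, hg, hfg⟩ :=
    (LipschitzOnWith.of_tendsto (fun n => (hlip n).lipschitzOnWith) hconv).extend_real
  have hequi : Equicontinuous fun n x => infDist x (Ω n) :=
    (LipschitzWith.uniformEquicontinuous _ 1 hlip).equicontinuous
  have htend : ∀ x, Tendsto (fun n => infDist x (Ω n)) atTop (𝓝 (g x)) := fun x =>
    (hequi x).tendsto_of_mem_closure (hg.continuous.continuousAt.mono_left nhdsWithin_le_nhds)
      (fun y hy => hfg hy ▸ hconv y hy) (hD x)
  have hΩ₀ := infDist_preimage_zero_of_tendsto_infDist hne htend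
  obtain ⟨z, hz, -⟩ := exists_dist_eq_of_tendsto_infDist hne htend 0
  refine ⟨g ⁻¹' {0}, isClosed_singleton.preimage hg.continuous, ⟨z, hz⟩,
    fun x hx => (hΩ₀ x).trans (hfg hx).symm, fun K hK => ?_⟩
  simp only [hΩ₀]
  exact (hequi.equicontinuousOn K).tendstoUniformlyOn_of_tendsto hK fun x _ => htend x

/-- If the distance functions of nonempty closed sets `Ω n ⊆ ℝ^N` converge pointwise
on a dense set `D` to a function `f`, then there is a nonempty closed set `Ω₀` whose
distance function agrees with `f` on `D`, and the distance functions converge to that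
of `Ω₀` uniformly on compact sets. -/
theorem stmt_6 {N : ℕ} (Ω : ℕ → Set (EuclideanSpace ℝ (Fin N)))
    (hcl : ∀ n, IsClosed (Ω n)) (hne : ∀ n, (Ω n).Nonempty)
    (D : Set (EuclideanSpace ℝ (Fin N))) (hD : Dense D)
    (f : EuclideanSpace ℝ (Fin N) → ℝ)
    (hconv : ∀ x ∈ D, Filter.Tendsto (fun n => infDist x (Ω n)) Filter.atTop
      (nhds (f x))) :
    ∃ Ω₀ : Set (EuclideanSpace ℝ (Fin N)), IsClosed Ω₀ ∧ Ω₀.Nonempty ∧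
      (∀ x ∈ D, infDist x Ω₀ = f x) ∧
      ∀ K : Set (EuclideanSpace ℝ (Fin N)), IsCompact K →
        TendstoUniformlyOn (fun n x => infDist x (Ω n)) (fun x => infDist x Ω₀)
          Filter.atTop K :=
  stmt_6_general Ω hne D hD f hconv
end

section
/- The space of nonempty compact subsets of ℝ^N with the Hausdorff metric satisfies the Menger convexity property: for any nonempty compact sets A, B and any λ ∈ [0,1], there exists a nonempty compact set C with d_H(A,C) = λ·d_H(A,B) and d_H(B,C) = (1−λ)·d_H(A,B). -/
/-!
For `d = d_H(A, B)` take `C = cthickening (λ d) A ∩ cthickening ((1 - λ) d) B`. Every `a ∈ A`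
has some `b ∈ B` with `|a - b| ≤ d`, and the point `(1 - λ) a + λ b` of the segment lies in `C`
at distance `λ |a - b|` from `a`; together with `C ⊆ cthickening (λ d) A` this gives
`d_H(A, C) ≤ λ d`, and symmetrically `d_H(B, C) ≤ (1 - λ) d`. The triangle inequality
`d ≤ d_H(A, C) + d_H(C, B)` forces both inequalities to be equalities.
-/

open Metric Set AffineMap Bornology

theorem IsCompact.exists_dist_le_hausdorffDist {α : Type*} [PseudoMetricSpace α] {A B : Set α}
    (hB : IsCompact B) (hBne : B.Nonempty) (hfin : hausdorffEDist A B ≠ ⊤) {a : α}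
    (ha : a ∈ A) : ∃ b ∈ B, dist a b ≤ hausdorffDist A B := by
  obtain ⟨b, hb, hab⟩ := hB.exists_infDist_eq_dist hBne a
  exact ⟨b, hb, hab ▸ infDist_le_hausdorffDist_of_mem ha hfin⟩

namespace Metric

section PseudoMetric

variable {α : Type*} [PseudoMetricSpace α]

theorem infDist_le_of_mem_cthickening {A : Set α} {δ : ℝ} (hδ : 0 ≤ δ) {x : α}
    (hx : x ∈ cthickening δ A) : infDist x A ≤ δ :=
  ENNReal.toReal_le_of_le_ofReal hδ (mem_cthickening_iff.mp hx)

def hausdorffInterp (A B : Set α) (t : ℝ) : Set α :=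
  cthickening (t * hausdorffDist A B) A ∩ cthickening ((1 - t) * hausdorffDist A B) B

theorem hausdorffInterp_symm (A B : Set α) (t : ℝ) :
    hausdorffInterp B A (1 - t) = hausdorffInterp A B t := by
  rw [hausdorffInterp, hausdorffInterp, hausdorffDist_comm, sub_sub_cancel, inter_comm]

theorem isCompact_hausdorffInterp [ProperSpace α] {A : Set α} (hA : IsCompact A) (B : Set α)
    (t : ℝ) : IsCompact (hausdorffInterp A B t) :=
  hA.cthickening.of_isClosed_subset (isClosed_cthickening.inter isClosed_cthickening)
    inter_subset_left

end PseudoMetric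

variable {E : Type*} [NormedAddCommGroup E] [NormedSpace ℝ E] {A B : Set E} {t : ℝ}

theorem lineMap_mem_hausdorffInterp {a b : E} (ha : a ∈ A) (hb : b ∈ B)
    (hab : dist a b ≤ hausdorffDist A B) (ht : t ∈ Icc (0 : ℝ) 1) :
    lineMap a b t ∈ hausdorffInterp A B t := by
  obtain ⟨ht0, ht1⟩ := ht
  constructor
  · refine mem_cthickening_of_dist_le _ a _ _ ha ?_
    rw [dist_lineMap_left, Real.norm_of_nonneg ht0]
    exact mul_le_mul_of_nonneg_left hab ht0
  · refine mem_cthickening_of_dist_le _ b _ _ hb ?_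
    rw [dist_lineMap_right, Real.norm_of_nonneg (sub_nonneg.mpr ht1)]
    exact mul_le_mul_of_nonneg_left hab (sub_nonneg.mpr ht1)

theorem hausdorffInterp_nonempty (hA : IsBounded A) (hB : IsCompact B) (hAne : A.Nonempty)
    (hBne : B.Nonempty) (ht : t ∈ Icc (0 : ℝ) 1) : (hausdorffInterp A B t).Nonempty := by
  obtain ⟨a, ha⟩ := hAne
  obtain ⟨b, hb, hab⟩ := hB.exists_dist_le_hausdorffDist hBne
    (hausdorffEDist_ne_top_of_nonempty_of_bounded ⟨a, ha⟩ hBne hA hB.isBounded) ha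
  exact ⟨_, lineMap_mem_hausdorffInterp ha hb hab ht⟩

theorem hausdorffDist_hausdorffInterp_le (hA : IsBounded A) (hB : IsCompact B)
    (hAne : A.Nonempty) (hBne : B.Nonempty) (ht : t ∈ Icc (0 : ℝ) 1) :
    hausdorffDist A (hausdorffInterp A B t) ≤ t * hausdorffDist A B := by
  have hfin := hausdorffEDist_ne_top_of_nonempty_of_bounded hAne hBne hA hB.isBounded
  have hr : 0 ≤ t * hausdorffDist A B := mul_nonneg ht.1 hausdorffDist_nonneg
  refine hausdorffDist_le_of_infDist hr (fun a ha => ?_) fun c hc =>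
    infDist_le_of_mem_cthickening hr hc.1
  obtain ⟨b, hb, hab⟩ := hB.exists_dist_le_hausdorffDist hBne hfin ha
  calc infDist a (hausdorffInterp A B t)
      ≤ dist a (lineMap a b t) :=
        infDist_le_dist_of_mem (lineMap_mem_hausdorffInterp ha hb hab ht)
    _ = t * dist a b := by rw [dist_left_lineMap, Real.norm_of_nonneg ht.1]
    _ ≤ t * hausdorffDist A B := mul_le_mul_of_nonneg_left hab ht.1

theorem hausdorffDist_hausdorffInterp (hA : IsCompact A) (hB : IsCompact B)
    (hAne : A.Nonempty) (hBne : B.Nonempty) (ht : t ∈ Icc (0 : ℝ) 1) :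
    hausdorffDist A (hausdorffInterp A B t) = t * hausdorffDist A B ∧
      hausdorffDist B (hausdorffInterp A B t) = (1 - t) * hausdorffDist A B := by
  set C := hausdorffInterp A B t
  have hAC := hausdorffDist_hausdorffInterp_le hA.isBounded hB hAne hBne ht
  have hBC : hausdorffDist B C ≤ (1 - t) * hausdorffDist A B := by
    have ht' : 1 - t ∈ Icc (0 : ℝ) 1 := ⟨sub_nonneg.mpr ht.2, sub_le_self 1 ht.1⟩
    simpa only [C, ← hausdorffInterp_symm A B t, hausdorffDist_comm (s := B)]
      using hausdorffDist_hausdorffInterp_le hB.isBounded hA hBne hAne ht'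
  have hCne : C.Nonempty := hausdorffInterp_nonempty hA.isBounded hB hAne hBne ht
  have hCbdd : IsBounded C := hA.isBounded.cthickening.subset inter_subset_left
  have htri : hausdorffDist A B ≤ hausdorffDist A C + hausdorffDist B C := by
    rw [hausdorffDist_comm (s := B)]
    exact hausdorffDist_triangle
      (hausdorffEDist_ne_top_of_nonempty_of_bounded hAne hCne hA.isBounded hCbdd)
  constructor <;> linarith

end Metric

open Metric

/-- Menger convexity of the Hausdorff metric: for nonempty compact `A, B ⊆ ℝ^N` and
`λ ∈ [0,1]` there is a nonempty compact `C` with `d_H(A,C) = λ d_H(A,B)` and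
`d_H(B,C) = (1-λ) d_H(A,B)`. -/
theorem stmt_9 {N : ℕ} (A B : Set (EuclideanSpace ℝ (Fin N)))
    (hA : IsCompact A) (hB : IsCompact B) (hAne : A.Nonempty) (hBne : B.Nonempty)
    (lam : ℝ) (hlam : lam ∈ Set.Icc (0:ℝ) 1) :
    ∃ C : Set (EuclideanSpace ℝ (Fin N)), IsCompact C ∧ C.Nonempty ∧
      hausdorffDist A C = lam * hausdorffDist A B ∧
      hausdorffDist B C = (1 - lam) * hausdorffDist A B :=
  ⟨hausdorffInterp A B lam, isCompact_hausdorffInterp hA B lam,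
    hausdorffInterp_nonempty hA.isBounded hB hAne hBne hlam,
    hausdorffDist_hausdorffInterp hA hB hAne hBne hlam⟩
end

section
/- For fixed λ > 0, the fattened-area map A ↦ L^N(A + D_λ) (Lebesgue measure of the λ-fattening) is continuous on the space of nonempty compact subsets of ℝ^N equipped with the Hausdorff distance. -/
/-! For compact `A`, the set `A + D_λ` is the closed thickening `cthickening λ A`, and
`d_H(A, B) ≤ d` gives `cthickening (λ - d) A ⊆ cthickening λ B ⊆ cthickening (λ + d) A`.
So it suffices that `r ↦ L^N(cthickening r A)` is continuous at `r = λ > 0`. From the right this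
is continuity of measure along decreasing intersections. From the left the limit is the measure of
the open thickening, which misses only the level set `{x | infDist x A = λ}`; that set is null by
the Lebesgue density theorem, because each ball of radius `r ≤ λ` centred on it contains a ball of
radius `r / 4` lying in the open thickening. -/

open Metric Pointwise MeasureTheory TopologicalSpace

open Filter Set Topology

section Geometry

variable {E : Type*} [NormedAddCommGroup E] [NormedSpace ℝ E]

theorem exists_closedBall_subset_closedBall_inter_thickening {s : Set E} {δ r : ℝ} {x : E}
    (hx : x ∈ cthickening δ s \ thickening δ s) (hr : 0 < r) (hrδ : r ≤ δ) :
    ∃ y, closedBall y (4⁻¹ * r) ⊆ closedBall x r ∩ thickening δ s := by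
  obtain ⟨a, ha, hxa⟩ : ∃ a ∈ s, dist x a < δ + r / 4 := by
    have hδr : ENNReal.ofReal δ < ENNReal.ofReal (δ + r / 4) :=
      (ENNReal.ofReal_lt_ofReal_iff (by linarith)).2 (by linarith)
    obtain ⟨a, ha, h⟩ := infEDist_lt_iff.1 ((mem_cthickening_iff.1 hx.1).trans_lt hδr)
    exact ⟨a, ha, by rwa [edist_dist, ENNReal.ofReal_lt_ofReal_iff (by linarith)] at h⟩
  have hδxa : δ ≤ dist x a := not_lt.1 fun h => hx.2 (mem_thickening_iff.2 ⟨a, ha, h⟩)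
  -- `lineMap x a c` is the point at distance `r / 2` from `x` on the segment towards `a`
  set c := r / (2 * dist x a)
  have hc : 0 ≤ c := by positivity
  have hc1 : c ≤ 1 := (div_le_one (by linarith)).2 (by linarith)
  have hcx : c * dist x a = r / 2 := by
    rw [div_mul_eq_mul_div, mul_div_mul_right r 2 (by linarith)]
  refine ⟨AffineMap.lineMap x a c, subset_inter ?_ ?_⟩
  · refine closedBall_subset_closedBall' ?_
    rw [dist_lineMap_left, Real.norm_of_nonneg hc, hcx]
    linarith
  · refine (closedBall_subset_ball' ?_).trans (ball_subset_thickening ha δ)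
    rw [dist_lineMap_right, Real.norm_of_nonneg (by linarith), sub_mul, one_mul, hcx]
    linarith

end Geometry

section Porosity

variable {E : Type*} [NormedAddCommGroup E] [NormedSpace ℝ E] [FiniteDimensional ℝ E]
  [MeasurableSpace E] [BorelSpace E] (μ : Measure E) [μ.IsAddHaarMeasure]

theorem addHaar_eq_zero_of_eventually_closedBall_subset_diff {s : Set E} {κ : ℝ} (hκ : 0 < κ)
    (h : ∀ x ∈ s, ∀ᶠ r in 𝓝[>] 0, ∃ y, closedBall y (κ * r) ⊆ closedBall x r \ s) :
    μ s = 0 := by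
  set c := ENNReal.ofReal (κ ^ Module.finrank ℝ E)
  have hc : c ≠ 0 := by positivity
  have density_le : ∀ x ∈ s, ∀ᶠ r in 𝓝[>] 0,
      μ (s ∩ closedBall x r) / μ (closedBall x r) ≤ 1 - c := by
    intro x hx
    filter_upwards [h x hx, self_mem_nhdsWithin] with r ⟨y, hy⟩ (hr : 0 < r)
    have hball : μ (closedBall y (κ * r)) = c * μ (closedBall x r) := by
      rw [Measure.addHaar_closedBall_mul_of_pos μ y hκ, Measure.addHaar_closedBall_center μ x]
    refine ENNReal.div_le_of_le_mul ?_
    calc μ (s ∩ closedBall x r)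
        ≤ μ (closedBall x r \ closedBall y (κ * r)) :=
          measure_mono fun z hz => ⟨hz.2, fun hzy => (hy hzy).2 hz.1⟩
      _ = μ (closedBall x r) - c * μ (closedBall x r) := by
          rw [measure_sdiff (hy.trans sdiff_subset) measurableSet_closedBall.nullMeasurableSet
            measure_closedBall_lt_top.ne, hball]
      _ = (1 - c) * μ (closedBall x r) := by
          rw [ENNReal.sub_mul fun _ _ => measure_closedBall_lt_top.ne, one_mul]
  have not_density_point : ∀ x ∈ s,
      ¬ Tendsto (fun r => μ (s ∩ closedBall x r) / μ (closedBall x r)) (𝓝[>] 0) (𝓝 1) :=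
    fun x hx hlim => (ENNReal.sub_lt_self ENNReal.one_ne_top one_ne_zero hc).not_ge
      (le_of_tendsto hlim (density_le x hx))
  rw [← Measure.restrict_apply_self]
  exact measure_mono_null not_density_point
    (ae_iff.1 (Besicovitch.ae_tendsto_measure_inter_div μ s))

theorem addHaar_cthickening_diff_thickening {δ : ℝ} (hδ : 0 < δ) (s : Set E) :
    μ (cthickening δ s \ thickening δ s) = 0 := by
  refine addHaar_eq_zero_of_eventually_closedBall_subset_diff μ (by norm_num : (0 : ℝ) < 4⁻¹) ?_
  intro x hx
  filter_upwards [Ioc_mem_nhdsGT hδ] with r hr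
  obtain ⟨y, hy⟩ := exists_closedBall_subset_closedBall_inter_thickening hx hr.1 hr.2
  exact ⟨y, fun z hz => ⟨(hy hz).1, fun hzs => hzs.2 (hy hz).2⟩⟩

theorem addHaar_thickening_eq_addHaar_cthickening {δ : ℝ} (hδ : 0 < δ) (s : Set E) :
    μ (thickening δ s) = μ (cthickening δ s) :=
  (measure_mono (thickening_subset_cthickening δ s)).antisymm
    (measure_mono_ae (ae_le_set.2 (addHaar_cthickening_diff_thickening μ hδ s)))

end Porosity

section Thickening

variable {X : Type*} [PseudoMetricSpace X]

theorem thickening_eq_iUnion_cthickening {δ : ℝ} (hδ : 0 < δ) (s : Set X) :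
    thickening δ s = ⋃ r : Iio δ, cthickening r s := by
  refine Subset.antisymm (fun x hx => ?_)
    (iUnion_subset fun r => cthickening_subset_thickening' hδ r.2 s)
  obtain ⟨a, ha, hxa⟩ := mem_thickening_iff.1 hx
  exact mem_iUnion.2 ⟨⟨dist x a, hxa⟩, mem_cthickening_of_dist_le x a _ s ha le_rfl⟩

theorem cthickening_subset_cthickening_add_hausdorffDist {s t : Set X}
    (hst : hausdorffEDist s t ≠ ⊤) {δ : ℝ} (hδ : 0 ≤ δ) :
    cthickening δ s ⊆ cthickening (δ + hausdorffDist s t) t := by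
  have hs : s ⊆ cthickening (hausdorffDist s t) t := fun x hx => by
    rw [mem_cthickening_iff, hausdorffDist, ENNReal.ofReal_toReal hst]
    exact infEDist_le_hausdorffEDist_of_mem hx
  exact (cthickening_subset_of_subset δ hs).trans
    (cthickening_cthickening_subset hδ hausdorffDist_nonneg t)

variable [MeasurableSpace X] (μ : Measure X)

theorem tendsto_measure_cthickening_nhdsLT {δ : ℝ} (hδ : 0 < δ) (s : Set X) :
    Tendsto (fun r => μ (cthickening r s)) (𝓝[<] δ) (𝓝 (μ (thickening δ s))) := by
  have : (atTop : Filter (Iio δ)).IsCountablyGenerated := by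
    rw [← comap_coe_Iio_nhdsLT]
    infer_instance
  rw [thickening_eq_iUnion_cthickening hδ, ← map_coe_Iio_atTop δ, tendsto_map'_iff]
  exact tendsto_measure_iUnion_atTop fun r r' h => cthickening_mono h s

theorem tendsto_measure_cthickening_nhdsGT [OpensMeasurableSpace X] {δ : ℝ} {s : Set X}
    (hs : ∃ R > δ, μ (cthickening R s) ≠ ⊤) :
    Tendsto (fun r => μ (cthickening r s)) (𝓝[>] δ) (𝓝 (μ (cthickening δ s))) := by
  rw [cthickening_eq_iInter_cthickening]
  exact tendsto_measure_biInter_gt (fun r _ => isClosed_cthickening.nullMeasurableSet)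
    (fun _ _ _ h => cthickening_mono h s) hs

end Thickening

section Continuity

variable {E : Type*} [NormedAddCommGroup E] [NormedSpace ℝ E] [FiniteDimensional ℝ E]
  [MeasurableSpace E] [BorelSpace E] (μ : Measure E) [μ.IsAddHaarMeasure]

theorem continuousAt_addHaar_cthickening {s : Set E} (hs : Bornology.IsBounded s) {δ : ℝ}
    (hδ : 0 < δ) :
    ContinuousAt (fun r => μ (cthickening r s)) δ := by
  refine continuousAt_iff_continuous_left'_right'.2 ⟨?_, ?_⟩
  · simpa only [ContinuousWithinAt, addHaar_thickening_eq_addHaar_cthickening μ hδ s]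
      using tendsto_measure_cthickening_nhdsLT μ hδ s
  · exact tendsto_measure_cthickening_nhdsGT μ
      ⟨δ + 1, by linarith, hs.cthickening.measure_lt_top.ne⟩

theorem continuous_addHaar_cthickening_nonemptyCompacts {δ : ℝ} (hδ : 0 < δ) :
    Continuous fun A : NonemptyCompacts E => μ (cthickening δ (A : Set E)) := by
  refine continuous_iff_continuousAt.2 fun A => ?_
  have hf := continuousAt_addHaar_cthickening μ A.isCompact.isBounded hδ
  have hdist : Tendsto (fun B : NonemptyCompacts E => dist B A) (𝓝 A) (𝓝 0) :=
    tendsto_iff_dist_tendsto_zero.1 tendsto_id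
  have hfin : ∀ B C : NonemptyCompacts E, hausdorffEDist (B : Set E) C ≠ ⊤ := fun B C =>
    hausdorffEDist_ne_top_of_nonempty_of_bounded B.nonempty C.nonempty
      B.isCompact.isBounded C.isCompact.isBounded
  refine tendsto_of_tendsto_of_tendsto_of_le_of_le'
    (hf.tendsto.comp (by simpa using tendsto_const_nhds.sub hdist))
    (hf.tendsto.comp (by simpa using tendsto_const_nhds.add hdist)) ?_ ?_
  · filter_upwards [hdist.eventually (gt_mem_nhds hδ)] with B hB
    refine measure_mono ((cthickening_subset_cthickening_add_hausdorffDist (hfin A B)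
      (sub_nonneg.2 hB.le)).trans_eq ?_)
    rw [NonemptyCompacts.dist_eq, hausdorffDist_comm, sub_add_cancel]
  · exact Eventually.of_forall fun B => measure_mono
      (cthickening_subset_cthickening_add_hausdorffDist (hfin B A) hδ.le)

end Continuity

/-- For fixed `λ > 0`, the fattened-area map `A ↦ L^N(A + D_λ)` is continuous on the
space of nonempty compact subsets of `ℝ^N` with the Hausdorff distance. -/
theorem stmt_11 {N : ℕ} (lam : ℝ) (hlam : 0 < lam) :
    Continuous (fun A : NonemptyCompacts (EuclideanSpace ℝ (Fin N)) =>
      (volume ((A : Set (EuclideanSpace ℝ (Fin N)))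
        + closedBall (0 : EuclideanSpace ℝ (Fin N)) lam)).toReal) := by
  simp only [fun A : NonemptyCompacts (EuclideanSpace ℝ (Fin N)) =>
    A.isCompact.add_closedBall_zero hlam.le]
  refine continuous_iff_continuousAt.2 fun A => ?_
  exact ContinuousAt.comp (g := ENNReal.toReal)
    (ENNReal.continuousAt_toReal A.isCompact.cthickening.measure_lt_top.ne)
    (continuous_addHaar_cthickening_nonemptyCompacts volume hlam).continuousAt
end

section
/- Let p ∈ [1,∞) and φ:[0,∞)→(0,∞) be continuous, strictly decreasing with ∫_0^∞ t^{N−1} φ(t)^p dt < ∞. For a nonempty closed set Ω ⊆ ℝ^N, the function v_Ω = φ∘u_Ω belongs to L^p(ℝ^N) if and only if Ω is bounded. -/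
open Metric MeasureTheory Set Filter Topology

open scoped ENNReal

/-!
If `Ω` is unbounded, the unit thickening of `Ω` contains unit balls centred arbitrarily far out,
so it has infinite Haar measure; there `v_Ω ≥ φ 1 > 0`, which rules out `v_Ω ∈ Lᵖ`.
If `Ω ⊆ closedBall 0 R`, then `u_Ω x ≥ ‖x‖ - R`, so `v_Ω` is dominated by the radial function
`φ (max (‖x‖ - R) 0)`. In polar coordinates its `Lᵖ` norm is a one-dimensional integral, which
is finite near the origin by continuity and, away from it, is a translate of
`∫ t^(N-1) φ(t)^p dt` up to the factor `(1 + R)^(N-1)`.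
-/

lemma dist_sub_le_infDist {X : Type*} [PseudoMetricSpace X] {s : Set X} (hs : s.Nonempty)
    {c : X} {R : ℝ} (hsR : s ⊆ closedBall c R) (x : X) : dist x c - R ≤ infDist x s :=
  (le_infDist hs).2 fun y hy => by
    linarith [dist_triangle x y c, mem_closedBall.1 (hsR hy)]

lemma integrableOn_pow_mul_comp_max_sub {g : ℝ → ℝ} (hg : Continuous g) {n : ℕ} {R : ℝ}
    (hR : 0 ≤ R) (hint : IntegrableOn (fun t => t ^ n * g t) (Ioi 0)) :
    IntegrableOn (fun t => t ^ n * g (max (t - R) 0)) (Ioi 0) := by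
  have hcont : Continuous fun t : ℝ => t ^ n * g (max (t - R) 0) := by fun_prop
  rw [← Ioc_union_Ioi_eq_Ioi (by linarith : (0 : ℝ) ≤ R + 1)]
  refine (hcont.integrableOn_Icc.mono_set Ioc_subset_Icc_self).union ?_
  have hshift : IntegrableOn (fun t => (t - R) ^ n * g (t - R)) (Ioi (R + 1)) := by
    have := ((measurePreserving_sub_right volume R).integrableOn_comp_preimage
      (MeasurableEquiv.subRight R).measurableEmbedding).2 hint
    rw [preimage_sub_const_Ioi, zero_add] at this
    exact this.mono_set (Ioi_subset_Ioi (by linarith))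
  refine (hshift.norm.const_mul ((1 + R) ^ n)).mono' hcont.aestronglyMeasurable ?_
  refine (ae_restrict_iff' measurableSet_Ioi).2 (ae_of_all _ fun t (ht : R + 1 < t) => ?_)
  have hmax : max (t - R) 0 = t - R := max_eq_left (by linarith)
  have ht_le : t ≤ (1 + R) * (t - R) := by nlinarith
  rw [hmax, norm_mul, norm_mul, norm_pow, norm_pow, Real.norm_of_nonneg (by linarith : 0 ≤ t),
    Real.norm_of_nonneg (by linarith : 0 ≤ t - R), ← mul_assoc, ← mul_pow]
  exact mul_le_mul_of_nonneg_right (pow_le_pow_left₀ (by linarith) ht_le n) (norm_nonneg _)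

section AddHaar

variable {E : Type*} [NormedAddCommGroup E] [MeasurableSpace E] [BorelSpace E]
  (μ : Measure E) [μ.IsAddHaarMeasure]

lemma measure_thickening_eq_top_of_not_isBounded {s : Set E} (hs : ¬Bornology.IsBounded s)
    {r : ℝ} (hr : 0 < r) : μ (thickening r s) = ∞ := by
  by_contra hfin
  have htail : Tendsto (fun n : ℕ => μ (thickening r s \ closedBall (0 : E) n)) atTop (𝓝 0) := by
    have := tendsto_measure_iInter_atTop (μ := μ)
      (s := fun n : ℕ => thickening r s \ closedBall 0 n)
      (fun n => (isOpen_thickening.measurableSet.diff measurableSet_closedBall).nullMeasurableSet)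
      (fun m n hmn => sdiff_subset_sdiff_right (closedBall_subset_closedBall (Nat.cast_le.2 hmn)))
      ⟨0, ne_top_of_le_ne_top hfin (measure_mono sdiff_subset)⟩
    rwa [← sdiff_iUnion, iUnion_closedBall_nat, sdiff_univ, measure_empty] at this
  have hball : ∀ n : ℕ, μ (ball 0 r) ≤ μ (thickening r s \ closedBall (0 : E) n) := by
    intro n
    obtain ⟨x, hx, hxn⟩ : ∃ x ∈ s, x ∉ closedBall (0 : E) (n + r) :=
      not_subset.1 fun h => hs (isBounded_closedBall.subset h)
    rw [← Measure.addHaar_ball_center μ x]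
    refine measure_mono fun y hy => ⟨ball_subset_thickening hx r hy, fun hy0 => hxn ?_⟩
    rw [mem_ball] at hy
    rw [mem_closedBall] at hy0 ⊢
    linarith [dist_triangle x y 0, dist_comm x y]
  exact (measure_ball_pos μ 0 hr).ne' (le_antisymm (ge_of_tendsto' htail hball) bot_le)

lemma isBounded_of_memLp_comp_infDist {p : ℝ≥0∞} (hp0 : p ≠ 0) (hp : p ≠ ∞) {φ : ℝ → ℝ}
    (hφ1 : 0 < φ 1) (hφanti : AntitoneOn φ (Ici 0)) {s : Set E}
    (h : MemLp (fun x => φ (infDist x s)) p μ) : Bornology.IsBounded s := by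
  by_contra hs
  have hlevel : thickening 1 s ⊆ {x | ENNReal.ofReal (φ 1) ≤ ‖φ (infDist x s)‖ₑ} := by
    intro x hx
    obtain ⟨z, hz, hxz⟩ := mem_thickening_iff.1 hx
    have hφx : φ 1 ≤ φ (infDist x s) :=
      hφanti (mem_Ici.2 infDist_nonneg) (mem_Ici.2 zero_le_one)
        ((infDist_le_dist_of_mem hz).trans hxz.le)
    rw [mem_ofPred_eq, Real.enorm_eq_ofReal (hφ1.trans_le hφx).le]
    exact ENNReal.ofReal_le_ofReal hφx
  have hfin := h.meas_ge_lt_top'_enorm hp0 hp (ENNReal.ofReal_pos.2 hφ1).ne'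
    fun h => absurd h ENNReal.ofReal_ne_top
  exact ((measure_mono hlevel).trans_lt hfin).ne
    (measure_thickening_eq_top_of_not_isBounded μ hs one_pos)

variable [NormedSpace ℝ E] [FiniteDimensional ℝ E]

lemma memLp_fun_norm_addHaar_iff [Nontrivial E] {g : ℝ → ℝ} (hg : Measurable g) {p : ℝ}
    (hp : 0 < p) :
    MemLp (fun x => g ‖x‖) (ENNReal.ofReal p) μ ↔
      IntegrableOn (fun y => y ^ (Module.finrank ℝ E - 1) * ‖g y‖ ^ p) (Ioi 0) := by
  rw [← integrable_norm_rpow_iff (f := fun x : E => g ‖x‖)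
    (hg.comp measurable_norm).aestronglyMeasurable (by simpa using hp) ENNReal.ofReal_ne_top,
    ENNReal.toReal_ofReal hp.le]
  exact integrable_fun_norm_addHaar μ (f := fun y => ‖g y‖ ^ p)

lemma memLp_comp_infDist_of_isBounded {p : ℝ} (hp : 0 < p) {φ : ℝ → ℝ}
    (hφnonneg : ∀ t, 0 ≤ t → 0 ≤ φ t) (hφcont : Continuous φ) (hφanti : AntitoneOn φ (Ici 0))
    (hφint : IntegrableOn (fun t => t ^ (Module.finrank ℝ E - 1) * φ t ^ p) (Ioi 0))
    {s : Set E} (hs : s.Nonempty) (hsb : Bornology.IsBounded s) :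
    MemLp (fun x => φ (infDist x s)) (ENNReal.ofReal p) μ := by
  have hcont : Continuous fun x => φ (infDist x s) := hφcont.comp (continuous_infDist_pt s)
  rcases subsingleton_or_nontrivial E with hE | hE
  · exact MemLp.of_bound hcont.aestronglyMeasurable ‖φ (infDist 0 s)‖
      (ae_of_all _ fun x => by rw [Subsingleton.elim x 0])
  obtain ⟨R, hR, hsR⟩ := hsb.subset_closedBall_lt 0 0
  have hradial : MemLp (fun x => φ (max (‖x‖ - R) 0)) (ENNReal.ofReal p) μ := by
    refine (memLp_fun_norm_addHaar_iff μ (g := fun t => φ (max (t - R) 0)) (by fun_prop) hp).2 ?_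
    refine integrableOn_pow_mul_comp_max_sub (g := fun t => ‖φ t‖ ^ p)
      (hφcont.norm.rpow_const fun _ => Or.inr hp.le) hR.le ?_
    exact hφint.congr_fun (fun t ht => by rw [Real.norm_of_nonneg (hφnonneg t (le_of_lt ht))])
      measurableSet_Ioi
  refine hradial.mono hcont.aestronglyMeasurable (ae_of_all _ fun x => ?_)
  have hx : max (‖x‖ - R) 0 ≤ infDist x s :=
    max_le (by simpa using dist_sub_le_infDist hs hsR x) infDist_nonneg
  rw [Real.norm_of_nonneg (hφnonneg _ infDist_nonneg),
    Real.norm_of_nonneg (hφnonneg _ (le_max_right _ _))]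
  exact hφanti (mem_Ici.2 (le_max_right _ _)) (mem_Ici.2 infDist_nonneg) hx

end AddHaar

theorem stmt_13_general {N : ℕ} (p : ℝ) (hp : 1 ≤ p) (φ : ℝ → ℝ)
    (hφpos : ∀ t : ℝ, 0 ≤ t → 0 < φ t) (hφcont : Continuous φ)
    (hφanti : StrictAntiOn φ (Ici 0))
    (hφint : IntegrableOn (fun t : ℝ => t ^ (N - 1) * φ t ^ p) (Ioi 0))
    (Ω : Set (EuclideanSpace ℝ (Fin N))) (hne : Ω.Nonempty) :
    MemLp (fun x => φ (infDist x Ω)) (ENNReal.ofReal p) volume ↔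
      Bornology.IsBounded Ω := by
  have hp0 : 0 < p := zero_lt_one.trans_le hp
  refine ⟨isBounded_of_memLp_comp_infDist volume (by simpa using hp0) ENNReal.ofReal_ne_top
    (hφpos 1 zero_le_one) hφanti.antitoneOn, fun hΩ => ?_⟩
  refine memLp_comp_infDist_of_isBounded volume hp0 (fun t ht => (hφpos t ht).le) hφcont
    hφanti.antitoneOn ?_ hne hΩ
  rwa [finrank_euclideanSpace_fin]

/-- Let `p ∈ [1,∞)` and `φ : [0,∞) → (0,∞)` be continuous, strictly decreasing with
`∫_0^∞ t^(N-1) φ(t)^p dt < ∞`.  For a nonempty closed `Ω ⊆ ℝ^N`, the function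
`v_Ω = φ ∘ u_Ω` is in `L^p(ℝ^N)` iff `Ω` is bounded. -/
theorem stmt_13 {N : ℕ} (p : ℝ) (hp : 1 ≤ p) (φ : ℝ → ℝ)
    (hφpos : ∀ t : ℝ, 0 ≤ t → 0 < φ t) (hφcont : Continuous φ)
    (hφanti : StrictAntiOn φ (Ici 0))
    (hφint : IntegrableOn (fun t : ℝ => t ^ (N - 1) * φ t ^ p) (Ioi 0))
    (Ω : Set (EuclideanSpace ℝ (Fin N))) (hΩ : IsClosed Ω) (hne : Ω.Nonempty) :
    MemLp (fun x => φ (infDist x Ω)) (ENNReal.ofReal p) volume ↔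
      Bornology.IsBounded Ω :=
  stmt_13_general p hp φ hφpos hφcont hφanti hφint Ω hne
end

section
/- With φ as above and d(A,B) = ‖φ∘u_A − φ∘u_B‖_{L^p}, for any two nonempty compact sets Ω_1, Ω_2 one has the strict inequality d(Ω_1,Ω_2) < ‖φ∘u_{Ω_1}‖_{L^p} + ‖φ∘u_{Ω_2}‖_{L^p}. -/
/-!
Write `f = φ ∘ u_{Ω₁}` and `g = φ ∘ u_{Ω₂}` and let `m = min f g`, which is positive everywhere.
Then `f - g = (f - m) - (g - m)` with `0 ≤ f - m < f` and `0 ≤ g - m ≤ g` pointwise, so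
Minkowski's inequality gives `‖f - g‖ₚ ≤ ‖f - m‖ₚ + ‖g - m‖ₚ < ‖f‖ₚ + ‖g‖ₚ`; the middle
inequality is strict because `‖f‖ₚ` is finite. Finiteness holds because `Ω` lies in a ball of
radius `R`, so `φ ∘ u_Ω` is dominated by the radial function `φ (max (‖x‖ - R) 0)`, whose
`L^p` norm reduces in polar coordinates to the assumed integrability of `t ^ (N - 1) φ(t) ^ p`.
-/

open Metric MeasureTheory Set
open scoped ENNReal

namespace MeasureTheory

variable {α E F : Type*} [MeasurableSpace α] {μ : Measure α} {p : ℝ≥0∞}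
  [NormedAddCommGroup E] [NormedAddCommGroup F]

theorem eLpNorm_lt_eLpNorm_of_ae_enorm_lt
    {f : α → E} {g : α → F} (hμ : μ ≠ 0) (hp0 : p ≠ 0) (hp_top : p ≠ ∞)
    (hg : MemLp g p μ) (hfg : ∀ᵐ x ∂μ, ‖f x‖ₑ < ‖g x‖ₑ) :
    eLpNorm f p μ < eLpNorm g p μ := by
  have hp_pos : 0 < p.toReal := ENNReal.toReal_pos hp0 hp_top
  simp only [eLpNorm_eq_lintegral_rpow_enorm_toReal hp0 hp_top]
  gcongr ?_ ^ _
  refine lintegral_strict_mono hμ (hg.1.enorm.pow_const _) ?_ ?_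
  · refine ne_top_of_le_ne_top
      (lintegral_rpow_enorm_lt_top_of_eLpNorm_lt_top hp0 hp_top hg.eLpNorm_lt_top).ne
      (lintegral_mono_ae ?_)
    filter_upwards [hfg] with x hx
    gcongr
  · filter_upwards [hfg] with x hx
    exact ENNReal.rpow_lt_rpow hx hp_pos

theorem eLpNorm_sub_lt_add_of_ae_pos (hμ : μ ≠ 0) (hp : 1 ≤ p) (hp_top : p ≠ ∞)
    {f g : α → ℝ} (hf : MemLp f p μ) (hg : MemLp g p μ)
    (hf0 : ∀ᵐ x ∂μ, 0 < f x) (hg0 : ∀ᵐ x ∂μ, 0 < g x) :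
    eLpNorm (f - g) p μ < eLpNorm f p μ + eLpNorm g p μ := by
  let m := fun x => min (f x) (g x)
  have hm : AEStronglyMeasurable m μ := hf.1.inf hg.1
  have hmf (x : α) : m x ≤ f x := min_le_left _ _
  have hmg (x : α) : m x ≤ g x := min_le_right _ _
  have hfm : eLpNorm (f - m) p μ < eLpNorm f p μ := by
    refine eLpNorm_lt_eLpNorm_of_ae_enorm_lt hμ (by positivity) hp_top hf ?_
    filter_upwards [hf0, hg0] with x hfx hgx
    have : 0 < m x := lt_min hfx hgx
    rw [← ofReal_norm, ← ofReal_norm, Pi.sub_apply, Real.norm_of_nonneg (sub_nonneg.2 (hmf x)),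
      Real.norm_of_nonneg hfx.le]
    exact (ENNReal.ofReal_lt_ofReal_iff hfx).2 (by linarith)
  have hgm : eLpNorm (g - m) p μ ≤ eLpNorm g p μ := by
    refine eLpNorm_mono_ae_real ?_
    filter_upwards [hf0, hg0] with x hfx hgx
    have : 0 < m x := lt_min hfx hgx
    rw [Pi.sub_apply, Real.norm_of_nonneg (sub_nonneg.2 (hmg x))]
    linarith
  calc eLpNorm (f - g) p μ = eLpNorm ((f - m) - (g - m)) p μ := by rw [sub_sub_sub_cancel_right]
    _ ≤ eLpNorm (f - m) p μ + eLpNorm (g - m) p μ := eLpNorm_sub_le (hf.1.sub hm) (hg.1.sub hm) hp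
    _ < eLpNorm f p μ + eLpNorm g p μ :=
      ENNReal.add_lt_add_of_lt_of_le (hgm.trans_lt hg.eLpNorm_lt_top).ne hfm hgm

end MeasureTheory

theorem integrableOn_Ioi_pow_mul_comp_max_sub {ψ : ℝ → ℝ} {n : ℕ} (hψc : Continuous ψ)
    (hψ0 : ∀ t, 0 ≤ t → 0 ≤ ψ t) (hψ : AntitoneOn ψ (Ici 0))
    (hint : IntegrableOn (fun t => t ^ n * ψ t) (Ioi 0)) {R : ℝ} (hR : 0 ≤ R) :
    IntegrableOn (fun t => t ^ n * ψ (max (t - R) 0)) (Ioi 0) := by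
  have hcont : Continuous fun t => t ^ n * ψ (max (t - R) 0) := by fun_prop
  rw [← Ioc_union_Ioi_eq_Ioi (by linarith : 0 ≤ 2 * R)]
  refine hcont.integrableOn_Ioc.union ?_
  -- beyond `2R` the shift `t ↦ t - R` moves `t` by at most `t / 2`
  have hdom : IntegrableOn (fun t => 2 ^ n * ((1 / 2 * t) ^ n * ψ (1 / 2 * t))) (Ioi (2 * R)) :=
    ((integrableOn_Ioi_comp_mul_left_iff (fun t => t ^ n * ψ t) _ (by norm_num)).2
      (hint.mono_set (Ioi_subset_Ioi (by linarith)))).const_mul _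
  refine hdom.mono' hcont.aestronglyMeasurable ?_
  filter_upwards [ae_restrict_mem measurableSet_Ioi] with t (ht : 2 * R < t)
  have ht0 : 0 ≤ t := by linarith
  have hmax : max (t - R) 0 = t - R := max_eq_left (by linarith)
  have hψle : ψ (t - R) ≤ ψ (1 / 2 * t) :=
    hψ (mem_Ici.2 (by linarith)) (mem_Ici.2 (by linarith)) (by linarith)
  rw [hmax, Real.norm_of_nonneg (mul_nonneg (pow_nonneg ht0 n) (hψ0 _ (by linarith)))]
  calc t ^ n * ψ (t - R) ≤ t ^ n * ψ (1 / 2 * t) :=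
        mul_le_mul_of_nonneg_left hψle (pow_nonneg ht0 n)
    _ = 2 ^ n * ((1 / 2 * t) ^ n * ψ (1 / 2 * t)) := by
      rw [mul_pow, ← mul_assoc, ← mul_assoc, ← mul_pow]; norm_num

theorem Metric.sub_le_infDist_of_subset_closedBall {E : Type*} [SeminormedAddCommGroup E]
    {Ω : Set E} {R : ℝ} (hne : Ω.Nonempty) (hΩ : Ω ⊆ closedBall 0 R) (x : E) :
    ‖x‖ - R ≤ infDist x Ω := by
  refine (le_infDist hne).2 fun y hy => ?_
  have hy : ‖y‖ ≤ R := mem_closedBall_zero_iff.1 (hΩ hy)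
  linarith [norm_sub_norm_le x y, dist_eq_norm x y]

theorem memLp_comp_infDist {E : Type*} [NormedAddCommGroup E] [NormedSpace ℝ E]
    [FiniteDimensional ℝ E] [MeasurableSpace E] [BorelSpace E] (μ : Measure E)
    [μ.IsAddHaarMeasure] {p : ℝ} (hp : 0 < p) {φ : ℝ → ℝ} (hφ0 : ∀ t, 0 ≤ t → 0 ≤ φ t)
    (hφc : Continuous φ) (hφ : AntitoneOn φ (Ici 0))
    (hφint : IntegrableOn (fun t => t ^ (Module.finrank ℝ E - 1) * φ t ^ p) (Ioi 0))
    {Ω : Set E} (hΩ : Bornology.IsBounded Ω) (hne : Ω.Nonempty) :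
    MemLp (fun x => φ (infDist x Ω)) (ENNReal.ofReal p) μ := by
  have hmeas : AEStronglyMeasurable (fun x => φ (infDist x Ω)) μ :=
    (hφc.comp (continuous_infDist_pt Ω)).aestronglyMeasurable
  have hle (x : E) {r : ℝ} (hr : r ≤ infDist x Ω) : ‖φ (infDist x Ω)‖ ≤ φ (max r 0) := by
    rw [Real.norm_of_nonneg (hφ0 _ infDist_nonneg)]
    exact hφ (mem_Ici.2 (le_max_right _ _)) infDist_nonneg (max_le hr infDist_nonneg)
  rcases subsingleton_or_nontrivial E with hE | hE
  · exact MemLp.of_bound hmeas (φ (max 0 0)) (ae_of_all _ fun x => hle x infDist_nonneg)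
  obtain ⟨R, hR, hΩR⟩ := hΩ.subset_closedBall_lt 0 0
  let ψ (r : ℝ) : ℝ := φ (max (r - R) 0)
  have hψ0 (r : ℝ) : 0 ≤ ψ r := hφ0 _ (le_max_right _ _)
  have hψ : MemLp (fun x : E => ψ ‖x‖) (ENNReal.ofReal p) μ := by
    rw [← integrable_norm_rpow_iff (by fun_prop) (by simpa using hp) ENNReal.ofReal_ne_top,
      ENNReal.toReal_ofReal hp.le]
    refine (integrable_fun_norm_addHaar μ (f := fun r => ‖ψ r‖ ^ p)).2 ?_
    simp only [Real.norm_of_nonneg (hψ0 _), smul_eq_mul]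
    refine integrableOn_Ioi_pow_mul_comp_max_sub (ψ := fun t => φ t ^ p)
      (hφc.rpow_const fun _ => Or.inr hp.le)
      (fun t ht => Real.rpow_nonneg (hφ0 t ht) p) ?_ hφint hR.le
    exact fun s hs t ht hst => Real.rpow_le_rpow (hφ0 t ht) (hφ hs ht hst) hp.le
  refine hψ.of_le hmeas (ae_of_all _ fun x => ?_)
  rw [Real.norm_of_nonneg (hψ0 _)]
  exact hle x (sub_le_infDist_of_subset_closedBall hne hΩR x)

/-- With `d(A,B) = ‖φ∘u_A − φ∘u_B‖_{L^p}`, for any two nonempty compact sets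
`Ω₁, Ω₂ ⊆ ℝ^N` one has the strict inequality
`d(Ω₁,Ω₂) < ‖φ∘u_{Ω₁}‖_{L^p} + ‖φ∘u_{Ω₂}‖_{L^p}`. -/
theorem stmt_14 {N : ℕ} (p : ℝ) (hp : 1 ≤ p) (φ : ℝ → ℝ)
    (hφpos : ∀ t : ℝ, 0 ≤ t → 0 < φ t) (hφcont : Continuous φ)
    (hφanti : StrictAntiOn φ (Ici 0))
    (hφint : IntegrableOn (fun t : ℝ => t ^ (N - 1) * φ t ^ p) (Ioi 0))
    (Ω₁ Ω₂ : Set (EuclideanSpace ℝ (Fin N)))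
    (h₁ : IsCompact Ω₁) (h₂ : IsCompact Ω₂) (hne₁ : Ω₁.Nonempty) (hne₂ : Ω₂.Nonempty) :
    eLpNorm (fun x => φ (infDist x Ω₁) - φ (infDist x Ω₂)) (ENNReal.ofReal p) volume
      < eLpNorm (fun x => φ (infDist x Ω₁)) (ENNReal.ofReal p) volume
        + eLpNorm (fun x => φ (infDist x Ω₂)) (ENNReal.ofReal p) volume := by
  have hφint' : IntegrableOn
      (fun t => t ^ (Module.finrank ℝ (EuclideanSpace ℝ (Fin N)) - 1) * φ t ^ p) (Ioi 0) := by
    rwa [finrank_euclideanSpace_fin]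
  have hmemLp {Ω : Set (EuclideanSpace ℝ (Fin N))} (hΩ : IsCompact Ω) (hne : Ω.Nonempty) :=
    memLp_comp_infDist volume (by linarith) (fun t ht => (hφpos t ht).le) hφcont
      hφanti.antitoneOn hφint' hΩ.isBounded hne
  exact eLpNorm_sub_lt_add_of_ae_pos (NeZero.ne volume) (ENNReal.one_le_ofReal.2 hp)
    ENNReal.ofReal_ne_top (hmemLp h₁ hne₁) (hmemLp h₂ hne₂)
    (ae_of_all _ fun _ => hφpos _ infDist_nonneg) (ae_of_all _ fun _ => hφpos _ infDist_nonneg)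
end

section
/- Local equiboundedness: there is a continuous increasing function b:[0,∞)→[0,∞) with b(0)=0 such that for all nonempty compact sets Ω, Ω' ⊆ ℝ^N, if ‖φ∘u_Ω − φ∘u_{Ω'}‖_{L^p} < b(r) then Ω' ⊆ Ω + D_r. In particular, b(r)^p = N ω_N ∫_0^{r/2} t^{N−1} (φ(t) − φ(r−t))^p dt works. -/
open Metric MeasureTheory Set Pointwise

/-!
Suppose `x₀ ∈ Ω'` lies at distance at least `r` from `Ω`. On the ball `B(x₀, r/2)` we have
`u_{Ω'}(x) ≤ |x - x₀|` and `u_Ω(x) ≥ r - |x - x₀|`, so since `φ` is decreasing,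
`|φ(u_Ω(x)) - φ(u_{Ω'}(x))| ≥ φ(|x - x₀|) - φ(r - |x - x₀|) ≥ 0`. Integrating the `p`-th
power of this radial lower bound in polar coordinates gives
`N ω_N ∫_0^{r/2} t^{N-1} (φ(t) - φ(r-t))^p dt`, so the `L^p` distance is at least the `p`-th
root `b(r)` of this quantity. Strict monotonicity of `φ` makes the integral strictly increasing
in `r`.
-/

/-- `N ω_N · radialGap φ p N r` is the paper's `b(r)^p`. -/
noncomputable def radialGap (φ : ℝ → ℝ) (p : ℝ) (N : ℕ) (r : ℝ) : ℝ :=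
  ∫ t in (0:ℝ)..(r / 2), t ^ (N - 1) * (φ t - φ (r - t)) ^ p

section radialGap

variable {φ : ℝ → ℝ} {p : ℝ} {N : ℕ}

@[simp]
lemma radialGap_zero : radialGap φ p N 0 = 0 := by
  simp [radialGap]

lemma continuous_radialGap (hφ : Continuous φ) (hp : 0 ≤ p) : Continuous (radialGap φ p N) :=
  intervalIntegral.continuous_parametric_intervalIntegral_of_continuous
    (by fun_prop (disch := exact fun _ => Or.inr hp)) (continuous_id.div_const 2)

lemma strictMonoOn_radialGap (hφc : Continuous φ) (hφ : StrictAntiOn φ (Ici 0)) (hp : 0 ≤ p) :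
    StrictMonoOn (radialGap φ p N) (Ici 0) := by
  intro r₁ (hr₁ : 0 ≤ r₁) r₂ (hr₂ : 0 ≤ r₂) h12
  have hint : ∀ r a b : ℝ, IntervalIntegrable
      (fun t => t ^ (N - 1) * (φ t - φ (r - t)) ^ p) volume a b := fun r a b =>
    (by fun_prop (disch := exact fun _ => Or.inr hp) : Continuous _).intervalIntegrable a b
  have hmono : radialGap φ p N r₁
      ≤ ∫ t in (0:ℝ)..(r₁ / 2), t ^ (N - 1) * (φ t - φ (r₂ - t)) ^ p := by
    refine intervalIntegral.integral_mono_on (by linarith) (hint _ _ _) (hint _ _ _)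
      fun t ht => ?_
    have hsym : φ (r₁ - t) ≤ φ t :=
      hφ.antitoneOn ht.1 (mem_Ici.2 (by linarith [ht.2])) (by linarith [ht.2])
    have hshift : φ (r₂ - t) ≤ φ (r₁ - t) :=
      hφ.antitoneOn (mem_Ici.2 (by linarith [ht.2])) (mem_Ici.2 (by linarith [ht.2])) (by linarith)
    gcongr
    exact pow_nonneg ht.1 _
  have hpos : 0 < ∫ t in (r₁ / 2)..(r₂ / 2), t ^ (N - 1) * (φ t - φ (r₂ - t)) ^ p := by
    refine intervalIntegral.intervalIntegral_pos_of_pos_on (hint _ _ _) (fun t ht => ?_)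
      (by linarith)
    have ht₀ : 0 < t := by linarith [ht.1]
    have : φ (r₂ - t) < φ t := hφ ht₀.le (mem_Ici.2 (by linarith [ht.2])) (by linarith [ht.2])
    exact mul_pos (pow_pos ht₀ _) (Real.rpow_pos_of_pos (by linarith) _)
  calc radialGap φ p N r₁
      ≤ ∫ t in (0:ℝ)..(r₁ / 2), t ^ (N - 1) * (φ t - φ (r₂ - t)) ^ p := hmono
    _ < (∫ t in (0:ℝ)..(r₁ / 2), t ^ (N - 1) * (φ t - φ (r₂ - t)) ^ p)
        + ∫ t in (r₁ / 2)..(r₂ / 2), t ^ (N - 1) * (φ t - φ (r₂ - t)) ^ p := by linarith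
    _ = radialGap φ p N r₂ :=
        intervalIntegral.integral_add_adjacent_intervals (hint _ _ _) (hint _ _ _)

end radialGap

lemma exists_continuous_strictMonoOn_rpow_eq {g : ℝ → ℝ} (hg : Continuous g)
    (hmono : StrictMonoOn g (Ici 0)) (h0 : g 0 = 0) {p : ℝ} (hp : 0 < p) :
    ∃ b : ℝ → ℝ, Continuous b ∧ StrictMonoOn b (Ici 0) ∧ b 0 = 0 ∧
      ∀ r, 0 ≤ r → 0 ≤ b r ∧ b r ^ p = g r := by
  have hg_nonneg : ∀ r, 0 ≤ r → 0 ≤ g r := fun r hr =>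
    h0 ▸ hmono.monotoneOn self_mem_Ici hr hr
  refine ⟨fun r => g (max r 0) ^ p⁻¹, ?_, ?_, ?_, fun r hr => ?_⟩
  · exact (hg.comp (continuous_id.max continuous_const)).rpow_const
      fun _ => Or.inr (by positivity)
  · intro x (hx : 0 ≤ x) y (hy : 0 ≤ y) hxy
    simp only [max_eq_left hx, max_eq_left hy]
    exact Real.rpow_lt_rpow (hg_nonneg x hx) (hmono hx hy hxy) (by positivity)
  · simp [h0, hp.ne']
  · simp only [max_eq_left hr]
    exact ⟨by positivity [hg_nonneg r hr], Real.rpow_inv_rpow (hg_nonneg r hr) hp.ne'⟩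

lemma setIntegral_closedBall_fun_dist {E : Type*} [NormedAddCommGroup E] [NormedSpace ℝ E]
    [Nontrivial E] [FiniteDimensional ℝ E] [MeasurableSpace E] [BorelSpace E] (μ : Measure E)
    [μ.IsAddHaarMeasure] (x₀ : E) {R : ℝ} (hR : 0 ≤ R) (g : ℝ → ℝ) :
    ∫ x in closedBall x₀ R, g (dist x x₀) ∂μ
      = Module.finrank ℝ E * μ.real (ball 0 1)
        * ∫ t in (0:ℝ)..R, t ^ (Module.finrank ℝ E - 1) * g t := by
  have hind : (closedBall x₀ R).indicator (fun x => g (dist x x₀))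
      = fun x => (Iic R).indicator g ‖x - x₀‖ := by
    ext x
    simp only [indicator, mem_closedBall, mem_Iic, dist_eq_norm]
  rw [← integral_indicator measurableSet_closedBall, hind,
    integral_sub_right_eq_self (fun x => (Iic R).indicator g ‖x‖) x₀,
    integral_fun_norm_addHaar μ, nsmul_eq_mul, smul_eq_mul, mul_assoc]
  have hind' : (fun t : ℝ => t ^ (Module.finrank ℝ E - 1) • (Iic R).indicator g t)
      = (Iic R).indicator fun t => t ^ (Module.finrank ℝ E - 1) * g t :=
    funext fun t => (indicator_mul_right _ _ g).symm
  rw [hind', setIntegral_indicator measurableSet_Iic, Ioi_inter_Iic,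
    intervalIntegral.integral_of_le hR]

lemma AntitoneOn.sub_le_abs_sub_comp_infDist {α : Type*} [PseudoMetricSpace α] {φ : ℝ → ℝ}
    (hφ : AntitoneOn φ (Ici 0)) {s t : Set α} {x₀ x : α} {r : ℝ} (hx₀ : x₀ ∈ t)
    (hfar : r ≤ infDist x₀ s) (hx : dist x x₀ ≤ r / 2) :
    0 ≤ φ (dist x x₀) - φ (r - dist x x₀) ∧
      φ (dist x x₀) - φ (r - dist x x₀) ≤ |φ (infDist x s) - φ (infDist x t)| := by
  have hd := dist_nonneg (x := x) (y := x₀)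
  have hnear : φ (dist x x₀) ≤ φ (infDist x t) :=
    hφ infDist_nonneg hd (infDist_le_dist_of_mem hx₀)
  have hs_far : φ (infDist x s) ≤ φ (r - dist x x₀) := by
    have := infDist_le_infDist_add_dist (x := x₀) (y := x) (s := s)
    rw [dist_comm] at this
    exact hφ (mem_Ici.2 (by linarith)) (mem_Ici.2 (by linarith)) (by linarith)
  have hgap : φ (r - dist x x₀) ≤ φ (dist x x₀) :=
    hφ hd (mem_Ici.2 (by linarith)) (by linarith)
  refine ⟨by linarith, ?_⟩
  rw [abs_sub_comm]
  exact le_trans (by linarith) (le_abs_self _)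

lemma ofReal_setIntegral_rpow_le_eLpNorm_rpow {α : Type*} [MeasurableSpace α] {μ : Measure α}
    {f g : α → ℝ} {s : Set α} (hs : MeasurableSet s) {p : ℝ} (hp : 0 < p)
    (hg : ∀ x ∈ s, 0 ≤ g x ∧ g x ≤ |f x|) :
    ENNReal.ofReal (∫ x in s, g x ^ p ∂μ) ≤ eLpNorm f (ENNReal.ofReal p) μ ^ p := by
  rw [eLpNorm_eq_lintegral_rpow_enorm_toReal (by simpa using hp) ENNReal.ofReal_ne_top,
    ENNReal.toReal_ofReal hp.le, ← ENNReal.rpow_mul, one_div_mul_cancel hp.ne', ENNReal.rpow_one]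
  calc ENNReal.ofReal (∫ x in s, g x ^ p ∂μ)
      ≤ ‖∫ x in s, g x ^ p ∂μ‖ₑ := by
        rw [Real.enorm_eq_ofReal_abs]
        exact ENNReal.ofReal_le_ofReal (le_abs_self _)
    _ ≤ ∫⁻ x in s, ‖g x ^ p‖ₑ ∂μ := enorm_integral_le_lintegral_enorm _
    _ ≤ ∫⁻ x in s, ‖f x‖ₑ ^ p ∂μ := by
        refine lintegral_mono_ae ((ae_restrict_mem hs).mono fun x hx => ?_)
        obtain ⟨hg₀, hgf⟩ := hg x hx
        rw [Real.enorm_eq_ofReal (Real.rpow_nonneg hg₀ p), Real.enorm_eq_ofReal_abs,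
          ENNReal.ofReal_rpow_of_nonneg (abs_nonneg _) hp.le]
        exact ENNReal.ofReal_le_ofReal (Real.rpow_le_rpow hg₀ hgf hp.le)
    _ ≤ ∫⁻ x, ‖f x‖ₑ ^ p ∂μ := setLIntegral_le_lintegral _ _

theorem subset_add_closedBall_of_eLpNorm_lt {E : Type*} [NormedAddCommGroup E]
    [NormedSpace ℝ E] [Nontrivial E] [FiniteDimensional ℝ E] [MeasurableSpace E] [BorelSpace E]
    {μ : Measure E} [μ.IsAddHaarMeasure] {p : ℝ} (hp : 0 < p) {φ : ℝ → ℝ}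
    (hφ : AntitoneOn φ (Ici 0)) {Ω Ω' : Set E} (hΩ : IsCompact Ω) (hΩne : Ω.Nonempty)
    {r b : ℝ} (hr : 0 ≤ r) (hb : 0 ≤ b)
    (hbp : b ^ p = Module.finrank ℝ E * μ.real (ball 0 1) * radialGap φ p (Module.finrank ℝ E) r)
    (hlt : eLpNorm (fun x => φ (infDist x Ω) - φ (infDist x Ω')) (ENNReal.ofReal p) μ
      < ENNReal.ofReal b) :
    Ω' ⊆ Ω + closedBall 0 r := by
  rw [hΩ.add_closedBall_zero hr]
  intro x₀ hx₀
  by_contra hout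
  have hfar : r ≤ infDist x₀ Ω := by
    by_contra! hnear
    obtain ⟨y, hy, hdist⟩ := hΩ.exists_infDist_eq_dist hΩne x₀
    exact hout (mem_cthickening_of_dist_le x₀ y r Ω hy (hdist ▸ hnear.le))
  have hball : b ^ p
      = ∫ x in closedBall x₀ (r / 2), (φ (dist x x₀) - φ (r - dist x x₀)) ^ p ∂μ := by
    rw [hbp]
    exact (setIntegral_closedBall_fun_dist μ x₀ (by linarith)
      fun d => (φ d - φ (r - d)) ^ p).symm
  have hle := ofReal_setIntegral_rpow_le_eLpNorm_rpow (μ := μ) measurableSet_closedBall hp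
    fun x hx => hφ.sub_le_abs_sub_comp_infDist hx₀ hfar (mem_closedBall.1 hx)
  rw [← hball, ← ENNReal.ofReal_rpow_of_nonneg hb hp.le, ENNReal.rpow_le_rpow_iff hp] at hle
  exact hlt.not_ge hle

theorem stmt_17_general {N : ℕ} (hN : 1 ≤ N) (p : ℝ) (hp : 1 ≤ p) (φ : ℝ → ℝ)
    (hφcont : Continuous φ)
    (hφanti : StrictAntiOn φ (Ici 0)) :
    ∃ b : ℝ → ℝ, Continuous b ∧ StrictMonoOn b (Ici 0) ∧ b 0 = 0 ∧
      (∀ r : ℝ, 0 ≤ r → b r ^ p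
        = N * (volume (ball (0 : EuclideanSpace ℝ (Fin N)) 1)).toReal
          * ∫ t in (0:ℝ)..(r / 2), t ^ (N - 1) * (φ t - φ (r - t)) ^ p) ∧
      ∀ r : ℝ, 0 < r → ∀ Ω Ω' : Set (EuclideanSpace ℝ (Fin N)),
        IsCompact Ω → Ω.Nonempty → IsCompact Ω' → Ω'.Nonempty →
        eLpNorm (fun x => φ (infDist x Ω) - φ (infDist x Ω')) (ENNReal.ofReal p) volume
          < ENNReal.ofReal (b r) →
        Ω' ⊆ Ω + closedBall (0 : EuclideanSpace ℝ (Fin N)) r := by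
  have hp₀ : 0 < p := by linarith
  have : Nonempty (Fin N) := ⟨⟨0, hN⟩⟩
  have hc : 0 < N * (volume (ball (0 : EuclideanSpace ℝ (Fin N)) 1)).toReal :=
    mul_pos (by exact_mod_cast hN)
      (ENNReal.toReal_pos (measure_ball_pos _ _ one_pos).ne' measure_ball_lt_top.ne)
  obtain ⟨b, hb_cont, hb_mono, hb_zero, hb⟩ := exists_continuous_strictMonoOn_rpow_eq
    (continuous_const.mul (continuous_radialGap (N := N) hφcont hp₀.le))
    ((strictMono_mul_left_of_pos hc).comp_strictMonoOn
      (strictMonoOn_radialGap hφcont hφanti hp₀.le))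
    (by simp) hp₀
  refine ⟨b, hb_cont, hb_mono, hb_zero, fun r hr => (hb r hr).2,
    fun r hr Ω Ω' hΩ hΩne _ _ hlt => ?_⟩
  obtain ⟨hb_nonneg, hbp⟩ := hb r hr.le
  refine subset_add_closedBall_of_eLpNorm_lt hp₀ hφanti.antitoneOn hΩ hΩne hr.le hb_nonneg ?_ hlt
  rw [finrank_euclideanSpace_fin]
  exact hbp

/-- Local equiboundedness: there is a continuous, (strictly) increasing `b` with
`b 0 = 0` and `b(r)^p = N ω_N ∫_0^{r/2} t^{N-1} (φ(t) - φ(r-t))^p dt`, such that for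
nonempty compact `Ω, Ω' ⊆ ℝ^N`, if `‖φ∘u_Ω − φ∘u_{Ω'}‖_{L^p} < b(r)` then
`Ω' ⊆ Ω + D_r`. -/
theorem stmt_17 {N : ℕ} (hN : 1 ≤ N) (p : ℝ) (hp : 1 ≤ p) (φ : ℝ → ℝ)
    (hφpos : ∀ t : ℝ, 0 ≤ t → 0 < φ t) (hφcont : Continuous φ)
    (hφanti : StrictAntiOn φ (Ici 0))
    (hφLp : MemLp (fun x : EuclideanSpace ℝ (Fin N) => φ ‖x‖) (ENNReal.ofReal p) volume) :
    ∃ b : ℝ → ℝ, Continuous b ∧ StrictMonoOn b (Ici 0) ∧ b 0 = 0 ∧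
      (∀ r : ℝ, 0 ≤ r → b r ^ p
        = N * (volume (ball (0 : EuclideanSpace ℝ (Fin N)) 1)).toReal
          * ∫ t in (0:ℝ)..(r / 2), t ^ (N - 1) * (φ t - φ (r - t)) ^ p) ∧
      ∀ r : ℝ, 0 < r → ∀ Ω Ω' : Set (EuclideanSpace ℝ (Fin N)),
        IsCompact Ω → Ω.Nonempty → IsCompact Ω' → Ω'.Nonempty →
        eLpNorm (fun x => φ (infDist x Ω) - φ (infDist x Ω')) (ENNReal.ofReal p) volume
          < ENNReal.ofReal (b r) →
        Ω' ⊆ Ω + closedBall (0 : EuclideanSpace ℝ (Fin N)) r :=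
  stmt_17_general hN p hp φ hφcont hφanti
end

section
/- Given a nonempty compact set A ⊆ ℝ^N containing the origin in its interior, the removal motion t ↦ A \ B_t (removing the open ball of radius t) is a Lipschitz path for the metric d(X,Y) = ‖φ∘u_X − φ∘u_Y‖_{L^p}, for t in a sufficiently small interval [0,T]; indeed ‖v_{A_{r+s}} − v_{A_s}‖_{L^p}^p ≤ ω_N r^p L^p (r+s)^N where L is a Lipschitz constant of φ near 0. -/
open Metric MeasureTheory Set
open scoped ENNReal NNReal

/-!
Write `u_t = infDist · (A \ B_t)`. Once the closed ball of radius `t` lies in `A`, the sphere of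
radius `t` lies in `A \ B_t`; pushing points of `A \ B_s` radially onto that sphere gives, for
`0 ≤ s ≤ t`, `u_s ≤ u_t ≤ u_s + (t - s)` and `u_t ≤ t` on `B_t`, while `u_t = u_s` off `B_t`
because the segment from `x ∉ B_t` to a point of `B_t` crosses the sphere. Hence
`|φ ∘ u_t - φ ∘ u_s| ≤ L (t - s) 1_{B_t}`, whose `L^p` norm is `L (t - s) |B_t|^{1/p}`, and
`|B_t| = ω_N t^N`.
-/

lemma Metric.infDist_eq_zero_of_subsingleton {α : Type*} [PseudoMetricSpace α] [Subsingleton α]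
    (x : α) (S : Set α) : infDist x S = 0 := by
  rcases S.eq_empty_or_nonempty with rfl | ⟨y, hy⟩
  · exact infDist_empty
  · exact infDist_zero_of_mem (Subsingleton.elim y x ▸ hy)

lemma Real.rpow_le_rpow_mul_of_le_mul_rpow_one_div {X a V p : ℝ} (hX : 0 ≤ X) (ha : 0 ≤ a)
    (hV : 0 ≤ V) (hp : 0 < p) (h : X ≤ a * V ^ (1 / p)) : X ^ p ≤ a ^ p * V :=
  calc X ^ p ≤ (a * V ^ (1 / p)) ^ p := by gcongr
    _ = a ^ p * V := by
      rw [Real.mul_rpow ha (by positivity), ← Real.rpow_mul hV, one_div_mul_cancel hp.ne',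
        Real.rpow_one]

section Geometry

variable {E : Type*} [NormedAddCommGroup E] {A : Set E} {s t : ℝ} {x : E}

lemma sphere_subset_diff_ball (hA : closedBall (0 : E) t ⊆ A) :
    sphere 0 t ⊆ A \ ball 0 t := fun _ hz =>
  ⟨hA (sphere_subset_closedBall hz), fun hz' => sphere_disjoint_ball.le_bot ⟨hz, hz'⟩⟩

variable [NormedSpace ℝ E]

lemma exists_norm_eq_dist_le_of_norm_le_of_le_norm {y : E} (hy : ‖y‖ ≤ t) (hx : t ≤ ‖x‖) :
    ∃ z : E, ‖z‖ = t ∧ dist x z ≤ dist x y := by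
  obtain ⟨θ, hθ, hθt⟩ := intermediate_value_Icc zero_le_one
    (continuous_norm.comp (AffineMap.lineMap_continuous (p := y) (q := x))).continuousOn
    (show t ∈ Icc ‖AffineMap.lineMap y x (0 : ℝ)‖ ‖AffineMap.lineMap y x (1 : ℝ)‖ by
      simpa using And.intro hy hx)
  refine ⟨_, hθt, ?_⟩
  rw [dist_comm x, dist_lineMap_right, Real.norm_eq_abs, abs_of_nonneg (by linarith [hθ.2]),
    dist_comm]
  exact mul_le_of_le_one_left dist_nonneg (by linarith [hθ.1])

variable [Nontrivial E]

lemma exists_norm_eq_dist_eq_sub_norm {y : E} (hy : ‖y‖ ≤ t) :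
    ∃ z : E, ‖z‖ = t ∧ dist y z = t - ‖y‖ := by
  rcases eq_or_ne y 0 with rfl | hy0
  · obtain ⟨z, hz⟩ := exists_norm_eq E ((norm_nonneg _).trans hy)
    exact ⟨z, hz, by simp [hz]⟩
  · have hny : 0 < ‖y‖ := norm_pos_iff.mpr hy0
    have ht : 0 ≤ t := hny.le.trans hy
    refine ⟨(t / ‖y‖) • y, ?_, ?_⟩
    · rw [norm_smul, Real.norm_of_nonneg (by positivity), div_mul_cancel₀ _ hny.ne']
    · have hsub : y - (t / ‖y‖) • y = (1 - t / ‖y‖) • y := by rw [sub_smul, one_smul]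
      rw [dist_eq_norm, hsub, norm_smul, Real.norm_eq_abs,
        abs_of_nonpos (by rw [sub_nonpos, le_div_iff₀ hny]; linarith)]
      field_simp
      ring

lemma diff_ball_nonempty (hA : closedBall (0 : E) t ⊆ A) (ht : 0 ≤ t) :
    (A \ ball 0 t).Nonempty :=
  (NormedSpace.sphere_nonempty.2 ht).mono (sphere_subset_diff_ball hA)

lemma infDist_diff_ball_le_sub_norm (hA : closedBall (0 : E) t ⊆ A) (hx : ‖x‖ ≤ t) :
    infDist x (A \ ball 0 t) ≤ t - ‖x‖ := by
  obtain ⟨z, hz, hxz⟩ := exists_norm_eq_dist_eq_sub_norm hx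
  exact hxz ▸ infDist_le_dist_of_mem (sphere_subset_diff_ball hA (mem_sphere_zero_iff_norm.2 hz))

lemma infDist_diff_ball_le_add (hA : closedBall (0 : E) t ⊆ A) (hs : 0 ≤ s) (hst : s ≤ t) :
    infDist x (A \ ball 0 t) ≤ infDist x (A \ ball 0 s) + (t - s) := by
  have hne : (A \ ball 0 s).Nonempty :=
    (diff_ball_nonempty hA (hs.trans hst)).mono (sdiff_subset_sdiff_right (ball_subset_ball hst))
  rw [← sub_le_iff_le_add, le_infDist hne]
  rintro y ⟨hyA, hys⟩
  rw [mem_ball_zero_iff, not_lt] at hys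
  rcases le_or_gt t ‖y‖ with hty | hyt
  · have := infDist_le_dist_of_mem (x := x) (show y ∈ A \ ball 0 t by simpa [hyA] using hty)
    linarith
  · obtain ⟨z, hz, hyz⟩ := exists_norm_eq_dist_eq_sub_norm hyt.le
    have := infDist_le_dist_of_mem (x := x)
      (sphere_subset_diff_ball hA (mem_sphere_zero_iff_norm.2 hz))
    linarith [dist_triangle x y z]

lemma infDist_diff_ball_eq_of_le_norm (hA : closedBall (0 : E) t ⊆ A) (ht : 0 ≤ t)
    (hst : s ≤ t) (hx : t ≤ ‖x‖) : infDist x (A \ ball 0 t) = infDist x (A \ ball 0 s) := by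
  have hsub : A \ ball 0 t ⊆ A \ ball 0 s := sdiff_subset_sdiff_right (ball_subset_ball hst)
  have hne := diff_ball_nonempty hA ht
  refine le_antisymm ((le_infDist (hne.mono hsub)).2 fun y ⟨hyA, _⟩ => ?_)
    (infDist_le_infDist_of_subset hsub hne)
  rcases le_or_gt t ‖y‖ with hty | hyt
  · exact infDist_le_dist_of_mem (by simpa [hyA] using hty)
  · obtain ⟨z, hz, hxz⟩ := exists_norm_eq_dist_le_of_norm_le_of_le_norm hyt.le hx
    exact (infDist_le_dist_of_mem
      (sphere_subset_diff_ball hA (mem_sphere_zero_iff_norm.2 hz))).trans hxz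

end Geometry

section Lp

variable {E : Type*} [NormedAddCommGroup E] [NormedSpace ℝ E] {A : Set E} {s t L R : ℝ}
  {φ : ℝ → ℝ}

lemma norm_comp_infDist_diff_ball_sub_le_indicator
    (hφ : ∀ a ∈ Icc 0 R, ∀ b ∈ Icc 0 R, |φ a - φ b| ≤ L * |a - b|)
    (hA : closedBall (0 : E) t ⊆ A) (hs : 0 ≤ s) (hst : s ≤ t) (htR : t ≤ R) (x : E) :
    ‖φ (infDist x (A \ ball 0 t)) - φ (infDist x (A \ ball 0 s))‖ ≤
      (ball (0 : E) t).indicator (fun _ => |L| * (t - s)) x := by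
  rcases subsingleton_or_nontrivial E with hE | hE
  · simp only [infDist_eq_zero_of_subsingleton, sub_self, norm_zero]
    exact indicator_nonneg (fun _ _ => mul_nonneg (abs_nonneg L) (sub_nonneg.2 hst)) x
  by_cases hx : x ∈ ball (0 : E) t
  · rw [indicator_of_mem hx, Real.norm_eq_abs]
    have hxt : ‖x‖ ≤ t := (mem_ball_zero_iff.1 hx).le
    have hmono : infDist x (A \ ball 0 s) ≤ infDist x (A \ ball 0 t) :=
      infDist_le_infDist_of_subset (sdiff_subset_sdiff_right (ball_subset_ball hst))
        (diff_ball_nonempty hA (hs.trans hst))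
    have hadd := infDist_diff_ball_le_add (x := x) hA hs hst
    have huR : infDist x (A \ ball 0 t) ≤ R := by
      linarith [infDist_diff_ball_le_sub_norm hA hxt, norm_nonneg x]
    calc |φ (infDist x (A \ ball 0 t)) - φ (infDist x (A \ ball 0 s))|
        ≤ L * |infDist x (A \ ball 0 t) - infDist x (A \ ball 0 s)| :=
          hφ _ ⟨infDist_nonneg, huR⟩ _ ⟨infDist_nonneg, hmono.trans huR⟩
      _ ≤ |L| * |infDist x (A \ ball 0 t) - infDist x (A \ ball 0 s)| := by
          gcongr; exact le_abs_self L
      _ ≤ |L| * (t - s) := by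
          gcongr; rw [abs_le]; constructor <;> linarith
  · rw [indicator_of_notMem hx, infDist_diff_ball_eq_of_le_norm hA (hs.trans hst) hst
      (by simpa using hx), sub_self, norm_zero]

variable [MeasurableSpace E] (μ : Measure E)

lemma measureReal_ball_le [FiniteDimensional ℝ E] [BorelSpace E] [μ.IsAddHaarMeasure] {r : ℝ}
    (hr : 0 ≤ r) : μ.real (ball 0 r) ≤ r ^ Module.finrank ℝ E * μ.real (ball 0 1) := by
  rcases hr.eq_or_lt with rfl | hr
  · simp only [ball_zero, measureReal_empty]
    positivity
  · rw [measureReal_def, μ.addHaar_ball_of_pos 0 hr, ENNReal.toReal_mul,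
      ENNReal.toReal_ofReal (by positivity), measureReal_def]

variable [OpensMeasurableSpace E]

lemma eLpNorm_comp_infDist_diff_ball_sub_le {p : ℝ≥0∞} (hp0 : p ≠ 0) (hp : p ≠ ∞)
    (hφ : ∀ a ∈ Icc 0 R, ∀ b ∈ Icc 0 R, |φ a - φ b| ≤ L * |a - b|)
    (hA : closedBall (0 : E) t ⊆ A) (hs : 0 ≤ s) (hst : s ≤ t) (htR : t ≤ R) :
    eLpNorm (fun x => φ (infDist x (A \ ball 0 t)) - φ (infDist x (A \ ball 0 s))) p μ ≤
      ‖|L| * (t - s)‖ₑ * μ (ball 0 t) ^ (1 / p.toReal) :=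
  (eLpNorm_mono_real (norm_comp_infDist_diff_ball_sub_le_indicator hφ hA hs hst htR)).trans_eq
    (eLpNorm_indicator_const measurableSet_ball hp0 hp)

lemma toReal_eLpNorm_comp_infDist_diff_ball_sub_le [ProperSpace E]
    [IsFiniteMeasureOnCompacts μ] {p : ℝ} (hp : 0 < p)
    (hφ : ∀ a ∈ Icc 0 R, ∀ b ∈ Icc 0 R, |φ a - φ b| ≤ L * |a - b|)
    (hA : closedBall (0 : E) t ⊆ A) (hs : 0 ≤ s) (hst : s ≤ t) (htR : t ≤ R) :
    (eLpNorm (fun x => φ (infDist x (A \ ball 0 t)) - φ (infDist x (A \ ball 0 s)))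
        (ENNReal.ofReal p) μ).toReal ≤ |L| * (t - s) * μ.real (ball 0 t) ^ (1 / p) := by
  have h := ENNReal.toReal_mono
    (ENNReal.mul_ne_top enorm_ne_top (ENNReal.rpow_ne_top_of_nonneg (by positivity)
      measure_ball_lt_top.ne))
    (eLpNorm_comp_infDist_diff_ball_sub_le μ (by simpa using hp) ENNReal.ofReal_ne_top hφ hA hs
      hst htR)
  rwa [ENNReal.toReal_mul, toReal_enorm,
    Real.norm_of_nonneg (mul_nonneg (abs_nonneg L) (sub_nonneg.2 hst)), ← ENNReal.toReal_rpow,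
    ENNReal.toReal_ofReal hp.le] at h

lemma toReal_eLpNorm_comp_infDist_diff_ball_sub_le_mul_abs_sub [ProperSpace E]
    [IsFiniteMeasureOnCompacts μ] {p T : ℝ} (hp : 0 < p)
    (hφ : ∀ a ∈ Icc 0 R, ∀ b ∈ Icc 0 R, |φ a - φ b| ≤ L * |a - b|)
    (hA : closedBall (0 : E) T ⊆ A) (hTR : T ≤ R) (hs : s ∈ Icc 0 T) (ht : t ∈ Icc 0 T) :
    (eLpNorm (fun x => φ (infDist x (A \ ball 0 s)) - φ (infDist x (A \ ball 0 t)))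
        (ENNReal.ofReal p) μ).toReal ≤ |L| * μ.real (ball 0 T) ^ (1 / p) * |s - t| := by
  wlog hts : t ≤ s generalizing s t
  · convert this ht hs (le_of_not_ge hts) using 2
    · exact eLpNorm_sub_comm _ _ _ _
    · exact abs_sub_comm _ _
  calc _ ≤ |L| * (s - t) * μ.real (ball 0 s) ^ (1 / p) :=
        toReal_eLpNorm_comp_infDist_diff_ball_sub_le μ hp hφ
          ((closedBall_subset_closedBall hs.2).trans hA) ht.1 hts (hs.2.trans hTR)
    _ ≤ |L| * (s - t) * μ.real (ball 0 T) ^ (1 / p) := by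
        gcongr
        exacts [measure_ball_lt_top.ne, hs.2]
    _ = _ := by rw [abs_of_nonneg (sub_nonneg.2 hts)]; ring

lemma toReal_eLpNorm_comp_infDist_diff_ball_sub_rpow_le [ProperSpace E] [FiniteDimensional ℝ E]
    [BorelSpace E] [μ.IsAddHaarMeasure] {p : ℝ} (hp : 0 < p)
    (hφ : ∀ a ∈ Icc 0 R, ∀ b ∈ Icc 0 R, |φ a - φ b| ≤ L * |a - b|)
    (hA : closedBall (0 : E) t ⊆ A) (hs : 0 ≤ s) (hst : s ≤ t) (htR : t ≤ R) :
    (eLpNorm (fun x => φ (infDist x (A \ ball 0 t)) - φ (infDist x (A \ ball 0 s)))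
        (ENNReal.ofReal p) μ).toReal ^ p ≤
      μ.real (ball 0 1) * (t - s) ^ p * |L| ^ p * t ^ Module.finrank ℝ E := by
  calc _ ≤ (|L| * (t - s)) ^ p * μ.real (ball 0 t) :=
        Real.rpow_le_rpow_mul_of_le_mul_rpow_one_div ENNReal.toReal_nonneg
          (mul_nonneg (abs_nonneg L) (sub_nonneg.2 hst)) measureReal_nonneg hp
          (toReal_eLpNorm_comp_infDist_diff_ball_sub_le μ hp hφ hA hs hst htR)
    _ ≤ (|L| * (t - s)) ^ p * (t ^ Module.finrank ℝ E * μ.real (ball 0 1)) := by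
        gcongr
        exact measureReal_ball_le μ (hs.trans hst)
    _ = _ := by rw [Real.mul_rpow (abs_nonneg L) (sub_nonneg.2 hst)]; ring

end Lp

theorem stmt_19_general {N : ℕ} (p : ℝ) (hp : 1 ≤ p) (φ : ℝ → ℝ)
    (hφC1 : ContDiff ℝ 1 φ)
    (A : Set (EuclideanSpace ℝ (Fin N)))
    (h0 : (0 : EuclideanSpace ℝ (Fin N)) ∈ interior A) :
    ∃ T : ℝ, 0 < T ∧
      (∃ C : ℝ, 0 ≤ C ∧ ∀ s ∈ Icc (0:ℝ) T, ∀ t ∈ Icc (0:ℝ) T,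
        (eLpNorm (fun x => φ (infDist x (A \ ball 0 s)) - φ (infDist x (A \ ball 0 t)))
          (ENNReal.ofReal p) volume).toReal ≤ C * |s - t|) ∧
      ∀ L : ℝ, 0 ≤ L → (∀ t₁ ∈ Icc (0:ℝ) (2 * T), ∀ t₂ ∈ Icc (0:ℝ) (2 * T),
          |φ t₁ - φ t₂| ≤ L * |t₁ - t₂|) →
        ∀ s r : ℝ, 0 ≤ s → 0 ≤ r → s + r ≤ T →
          (eLpNorm (fun x => φ (infDist x (A \ ball 0 (s + r)))
              - φ (infDist x (A \ ball 0 s))) (ENNReal.ofReal p) volume).toReal ^ p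
            ≤ (volume (ball (0 : EuclideanSpace ℝ (Fin N)) 1)).toReal
              * r ^ p * L ^ p * (r + s) ^ N := by
  have hp0 : 0 < p := by linarith
  obtain ⟨ε, hε, hεA⟩ := Metric.mem_nhds_iff.mp (mem_interior_iff_mem_nhds.mp h0)
  have hA : ∀ t ≤ ε / 2, closedBall (0 : EuclideanSpace ℝ (Fin N)) t ⊆ A := fun t ht =>
    (closedBall_subset_ball (by linarith)).trans hεA
  obtain ⟨K, hK⟩ := hφC1.contDiffOn.exists_lipschitzOnWith one_ne_zero (convex_Icc 0 (ε / 2))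
    isCompact_Icc
  have hφK : ∀ a ∈ Icc 0 (ε / 2), ∀ b ∈ Icc 0 (ε / 2), |φ a - φ b| ≤ K * |a - b| :=
    fun a ha b hb => by simpa only [Real.dist_eq] using hK.dist_le_mul a ha b hb
  refine ⟨ε / 2, by positivity,
    ⟨K * volume.real (ball (0 : EuclideanSpace ℝ (Fin N)) (ε / 2)) ^ (1 / p), by positivity,
      fun s hs t ht => ?_⟩, fun L hL0 hL s r hs hr hsr => ?_⟩
  · simpa only [NNReal.abs_eq] using toReal_eLpNorm_comp_infDist_diff_ball_sub_le_mul_abs_sub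
      volume hp0 hφK (hA _ le_rfl) le_rfl hs ht
  · have h := toReal_eLpNorm_comp_infDist_diff_ball_sub_rpow_le volume hp0 hL
      (hA (s + r) (by linarith)) hs (le_add_of_nonneg_right hr) (by linarith)
    rw [add_comm r s]
    rwa [add_sub_cancel_left, abs_of_nonneg hL0, finrank_euclideanSpace_fin, measureReal_def] at h

/-- Removal motion: for a nonempty compact `A ⊆ ℝ^N` with `0` in its interior, the
path `t ↦ A \ B_t` is Lipschitz for `d(X,Y) = ‖φ∘u_X − φ∘u_Y‖_{L^p}` on a small
interval `[0,T]`; indeed, with `L` a Lipschitz constant of `φ` near `0`,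
`‖v_{A\B_{s+r}} − v_{A\B_s}‖_{L^p}^p ≤ ω_N r^p L^p (r+s)^N`. -/
theorem stmt_19 {N : ℕ} (p : ℝ) (hp : 1 ≤ p) (φ : ℝ → ℝ)
    (hφpos : ∀ t : ℝ, 0 ≤ t → 0 < φ t) (hφC1 : ContDiff ℝ 1 φ)
    (hφanti : StrictAntiOn φ (Ici 0))
    (hφLp : MemLp (fun x : EuclideanSpace ℝ (Fin N) => φ ‖x‖) (ENNReal.ofReal p) volume)
    (A : Set (EuclideanSpace ℝ (Fin N))) (hA : IsCompact A) (hAne : A.Nonempty)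
    (h0 : (0 : EuclideanSpace ℝ (Fin N)) ∈ interior A) :
    ∃ T : ℝ, 0 < T ∧
      (∃ C : ℝ, 0 ≤ C ∧ ∀ s ∈ Icc (0:ℝ) T, ∀ t ∈ Icc (0:ℝ) T,
        (eLpNorm (fun x => φ (infDist x (A \ ball 0 s)) - φ (infDist x (A \ ball 0 t)))
          (ENNReal.ofReal p) volume).toReal ≤ C * |s - t|) ∧
      ∀ L : ℝ, 0 ≤ L → (∀ t₁ ∈ Icc (0:ℝ) (2 * T), ∀ t₂ ∈ Icc (0:ℝ) (2 * T),
          |φ t₁ - φ t₂| ≤ L * |t₁ - t₂|) →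
        ∀ s r : ℝ, 0 ≤ s → 0 ≤ r → s + r ≤ T →
          (eLpNorm (fun x => φ (infDist x (A \ ball 0 (s + r)))
              - φ (infDist x (A \ ball 0 s))) (ENNReal.ofReal p) volume).toReal ^ p
            ≤ (volume (ball (0 : EuclideanSpace ℝ (Fin N)) 1)).toReal
              * r ^ p * L ^ p * (r + s) ^ N :=
  stmt_19_general p hp φ hφC1 A h0
end
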